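/- arXiv:cs/0506102 — 10 statements merged into one kernel-verified Lean document; each statement's English description precedes it below -/
import Mathlib

section
/- Let A = (c_{ij}) be an a×a matrix over a field F and let B_1, ..., B_a be b×b matrices over F. Let M be the ab×ab block matrix whose (i,j) block is c_{ij}·B_j. Then det(M) = det(A)^b · det(B_1) · det(B_2) · ... · det(B_a). -/
open Matrix Kronecker

/-- Determinant of a block matrix whose (i,j) block is `A i j • B j`:
`det M = det A ^ b * ∏ j, det (B j)` (exact form of the ± statement). -/
theorem block_matrix_det {F : Type*} [Field F] (a b : ℕ)
    (A : Matrix (Fin a) (Fin a) F) (B : Fin a → Matrix (Fin b) (Fin b) F)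
    (M : Matrix (Fin a × Fin b) (Fin a × Fin b) F)
    (hM : ∀ (i j : Fin a) (s t : Fin b), M (i, s) (j, t) = A i j * B j s t) :
    M.det = A.det ^ b * ∏ j, (B j).det := by
  set e := Equiv.prodComm (Fin a) (Fin b)
  have hMeq : M = (A ⊗ₖ (1 : Matrix (Fin b) (Fin b) F)) *
      ((Matrix.blockDiagonal B).submatrix e e) := by
    ext ⟨i, s⟩ ⟨j, t⟩
    rw [hM]
    simp only [Matrix.mul_apply, Fintype.sum_prod_type, kroneckerMap_apply,
      Matrix.submatrix_apply, Equiv.prodComm_apply, Prod.swap_prod_mk,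
      Matrix.blockDiagonal_apply, Matrix.one_apply]
    simp [e, Finset.sum_ite_eq, mul_ite, ite_and, Finset.sum_ite_eq']
    rw [Fintype.sum_eq_single j (fun x hx => by simp [hx])]
    simp
  rw [hMeq, Matrix.det_mul, Matrix.det_kronecker, Matrix.det_submatrix_equiv_self,
    Matrix.det_blockDiagonal, Matrix.det_one, one_pow, mul_one, Fintype.card_fin]
end

section
/- Let F be a field, and let k, ℓ ≥ 0. Suppose a_1, ..., a_{k+1} ∈ F are distinct, and for each u = 1, ..., k+1 suppose b_{u,1}, ..., b_{u,ℓ+1} ∈ F are distinct (for fixed u). Consider the (k+1)(ℓ+1) points p_{u,v} = (a_u, b_{u,v}) ∈ F². Then the (k+1)(ℓ+1) × (k+1)(ℓ+1) matrix whose rows are indexed by pairs (i,j) with 0 ≤ i ≤ k, 0 ≤ j ≤ ℓ and whose entry in row (i,j) and column (u,v) is a_u^i · b_{u,v}^j is nonsingular. -/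
/-- The multivariate Vandermonde matrix of the rectangle `[0,k] × [0,ℓ]`, evaluated
at a `(k+1) × (ℓ+1)` configuration, is nonsingular. -/
theorem rect_vandermonde_nonsingular {F : Type*} [Field F] (k l : ℕ)
    (a : Fin (k + 1) → F) (ha : Function.Injective a)
    (b : Fin (k + 1) → Fin (l + 1) → F) (hb : ∀ u, Function.Injective (b u)) :
    (Matrix.of fun (r : Fin (k + 1) × Fin (l + 1)) (c : Fin (k + 1) × Fin (l + 1)) =>
      a c.1 ^ (r.1 : ℕ) * b c.1 c.2 ^ (r.2 : ℕ)).det ≠ 0 := by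
  have hM : (Matrix.of fun (r : Fin (k + 1) × Fin (l + 1)) (c : Fin (k + 1) × Fin (l + 1)) =>
      a c.1 ^ (r.1 : ℕ) * b c.1 c.2 ^ (r.2 : ℕ)) =
      (Matrix.blockDiagonal fun _ : Fin (l + 1) => (Matrix.vandermonde a).transpose) *
      ((Matrix.blockDiagonal fun u : Fin (k + 1) =>
        (Matrix.vandermonde (b u)).transpose).submatrix Prod.swap Prod.swap) := by
    ext ⟨i, j⟩ ⟨u, v⟩
    simp [Matrix.mul_apply, Matrix.blockDiagonal_apply, Matrix.vandermonde,
      Fintype.sum_prod_type, Finset.sum_ite_eq, Finset.sum_ite_eq',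
      mul_ite, ite_mul, mul_zero, zero_mul]
  rw [hM, Matrix.det_mul]
  have h1 : (Matrix.blockDiagonal fun _ : Fin (l + 1) => (Matrix.vandermonde a).transpose).det ≠ 0 := by
    rw [Matrix.det_blockDiagonal]
    refine Finset.prod_ne_zero_iff.mpr fun _ _ => ?_
    rw [Matrix.det_transpose]
    exact Matrix.det_vandermonde_ne_zero_iff.mpr ha
  have h2 : ((Matrix.blockDiagonal fun u : Fin (k + 1) =>
      (Matrix.vandermonde (b u)).transpose).submatrix Prod.swap Prod.swap).det ≠ 0 := by
    rw [show (Prod.swap : Fin (k+1) × Fin (l+1) → Fin (l+1) × Fin (k+1)) =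
      ⇑(Equiv.prodComm (Fin (k+1)) (Fin (l+1))) from rfl,
      Matrix.det_submatrix_equiv_self, Matrix.det_blockDiagonal]
    refine Finset.prod_ne_zero_iff.mpr fun u _ => ?_
    rw [Matrix.det_transpose]
    exact Matrix.det_vandermonde_ne_zero_iff.mpr (hb u)
  exact mul_ne_zero h1 h2
end

section
/- Let F_q be a finite field and k, ℓ nonnegative integers with k, ℓ < q-1. The toric code C_{P_{k,ℓ}} over F_q, obtained by evaluating the span of the monomials x^i y^j for 0 ≤ i ≤ k, 0 ≤ j ≤ ℓ at all points of (F_q^*)², has minimum distance exactly ((q-1) − k)·((q-1) − ℓ). -/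
open Polynomial Finset

/-
Write `w(x, y) = ∑ⱼ Gⱼ(x) yʲ` with `deg Gⱼ ≤ k` and let `j₀ ≤ l` be its degree in `y`. A nonzero
polynomial of degree `d` vanishes at no more than `d` of the `q - 1` units, so `G_{j₀}` is nonzero
at `q - 1 - k` or more values of `x`, and for each of them `w(x, ·)` is a nonzero polynomial of
degree `≤ l`, nonzero at `q - 1 - l` or more values of `y`. Equality holds for
`∏_{a ∈ A} (x - a) · ∏_{b ∈ B} (y - b)`, with `A`, `B` sets of `k` and `l` units: it is nonzero
exactly on `Aᶜ ×ˢ Bᶜ`.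
-/

section ProductCounting

variable {ι κ : Type*} [Fintype ι] [Fintype κ]

theorem card_filter_prod_eq_sum {P : ι → κ → Prop} [∀ i j, Decidable (P i j)] :
    #{p : ι × κ | P p.1 p.2} = ∑ i, #{j | P i j} := by
  simp only [card_filter, Fintype.sum_prod_type]

theorem card_filter_mul_ne_zero {M : Type*} [MulZeroClass M] [NoZeroDivisors M] [DecidableEq M]
    (u : ι → M) (v : κ → M) :
    #{p : ι × κ | u p.1 * v p.2 ≠ 0} = #{i | u i ≠ 0} * #{j | v j ≠ 0} := by
  simp_rw [mul_ne_zero_iff]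
  rw [← card_product, ← filter_product, univ_product_univ]

end ProductCounting

section RootCounting

variable {R ι κ : Type*} [CommRing R] [IsDomain R] [DecidableEq R] [Fintype ι] [Fintype κ]
  {f : ι → R} {g : κ → R}

theorem card_sub_natDegree_le_card_filter_eval_ne_zero (hf : f.Injective) {p : R[X]}
    (hp : p ≠ 0) : Fintype.card ι - p.natDegree ≤ #{i | p.eval (f i) ≠ 0} := by
  have hroots : #{i | p.eval (f i) = 0} ≤ p.natDegree := by
    rw [← card_image_of_injective _ hf]
    refine card_le_degree_of_subset_roots fun x hx => ?_
    obtain ⟨i, hi, rfl⟩ := mem_image.mp hx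
    exact (mem_roots hp).mpr (mem_filter.mp hi).2
  have hsplit := card_filter_add_card_filter_not (s := univ) (fun i => p.eval (f i) = 0)
  rw [card_univ] at hsplit
  simp only [ne_eq]
  omega

theorem card_sub_mul_card_sub_le_card_filter_evalEval_ne_zero (hf : f.Injective)
    (hg : g.Injective) {P : R[X][X]} (hP : P ≠ 0) :
    (Fintype.card ι - P.leadingCoeff.natDegree) * (Fintype.card κ - P.natDegree) ≤
      #{p : ι × κ | P.evalEval (f p.1) (g p.2) ≠ 0} := by
  have hfiber : ∀ i ∈ ({i | P.leadingCoeff.eval (f i) ≠ 0} : Finset ι),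
      Fintype.card κ - P.natDegree ≤ #{j | P.evalEval (f i) (g j) ≠ 0} := by
    intro i hi
    have hne : P.map (evalRingHom (f i)) ≠ 0 := fun h =>
      (mem_filter.mp hi).2 (by simpa using congrArg (coeff · P.natDegree) h)
    simp_rw [← map_evalRingHom_eval]
    exact (Nat.sub_le_sub_left natDegree_map_le _).trans
      (card_sub_natDegree_le_card_filter_eval_ne_zero hg hne)
  calc (Fintype.card ι - P.leadingCoeff.natDegree) * (Fintype.card κ - P.natDegree)
      ≤ #{i | P.leadingCoeff.eval (f i) ≠ 0} * (Fintype.card κ - P.natDegree) :=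
        Nat.mul_le_mul_right _
          (card_sub_natDegree_le_card_filter_eval_ne_zero hf (leadingCoeff_ne_zero.mpr hP))
    _ ≤ ∑ i ∈ {i | P.leadingCoeff.eval (f i) ≠ 0}, #{j | P.evalEval (f i) (g j) ≠ 0} :=
        card_nsmul_le_sum _ _ _ hfiber
    _ ≤ ∑ i, #{j | P.evalEval (f i) (g j) ≠ 0} := sum_le_sum_of_subset (subset_univ _)
    _ = #{p : ι × κ | P.evalEval (f p.1) (g p.2) ≠ 0} := card_filter_prod_eq_sum.symm

theorem exists_natDegree_eq_card_filter_eval_ne_zero (hf : f.Injective) {k : ℕ}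
    (hk : k ≤ Fintype.card ι) :
    ∃ p : R[X], p.natDegree = k ∧ #{i | p.eval (f i) ≠ 0} = Fintype.card ι - k := by
  classical
  obtain ⟨s, -, hs⟩ := exists_subset_card_eq (s := (univ : Finset ι)) (hk.trans_eq card_univ.symm)
  refine ⟨∏ a ∈ s, (X - C (f a)), by rw [natDegree_finsetProd_X_sub_C_eq_card, hs], ?_⟩
  have hnonroots : ({i | (∏ a ∈ s, (X - C (f a))).eval (f i) ≠ 0} : Finset ι) = sᶜ := by
    ext i
    simp [eval_prod, prod_eq_zero_iff, sub_eq_zero, hf.eq_iff]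
  rw [hnonroots, card_compl, hs]

end RootCounting

section Expansion

variable {R : Type*} [CommSemiring R] {k l : ℕ}

theorem eval_eq_sum_fin {p : R[X]} (hp : p.natDegree ≤ k) (x : R) :
    p.eval x = ∑ i : Fin (k + 1), p.coeff i * x ^ (i : ℕ) := by
  rw [eval_eq_sum_range' (Nat.lt_succ_of_le hp),
    Fin.sum_univ_eq_sum_range (fun i => p.coeff i * x ^ i)]

theorem eval_mul_eval_eq_sum_fin_prod {p q : R[X]} (hp : p.natDegree ≤ k) (hq : q.natDegree ≤ l)
    (x y : R) : p.eval x * q.eval y = ∑ e : Fin (k + 1) × Fin (l + 1),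
      p.coeff e.1 * q.coeff e.2 * x ^ (e.1 : ℕ) * y ^ (e.2 : ℕ) := by
  rw [eval_eq_sum_fin hp, eval_eq_sum_fin hq, sum_mul_sum, Fintype.sum_prod_type]
  exact sum_congr rfl fun i _ => sum_congr rfl fun j _ => by ring

/-- `c (i, j)` is the coefficient of `X ^ i * Y ^ j`, where `Y` is the outer variable. -/
noncomputable def rectanglePoly (c : Fin (k + 1) × Fin (l + 1) → R) : R[X][X] :=
  ∑ e, monomial e.2 (monomial e.1 (c e))

variable (c : Fin (k + 1) × Fin (l + 1) → R)

theorem evalEval_rectanglePoly (x y : R) :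
    (rectanglePoly c).evalEval x y = ∑ e, c e * x ^ (e.1 : ℕ) * y ^ (e.2 : ℕ) := by
  simp [rectanglePoly, evalEval_finsetSum, evalEval, eval_monomial, mul_assoc]

theorem natDegree_rectanglePoly_le : (rectanglePoly c).natDegree ≤ l :=
  natDegree_sum_le_of_forall_le _ _ fun e _ =>
    (natDegree_monomial_le _).trans (Nat.lt_succ_iff.mp e.2.isLt)

theorem natDegree_coeff_rectanglePoly_le (j : ℕ) : ((rectanglePoly c).coeff j).natDegree ≤ k := by
  rw [rectanglePoly, finsetSum_coeff]
  refine natDegree_sum_le_of_forall_le _ _ fun e _ => ?_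
  rw [coeff_monomial]
  split_ifs
  · exact (natDegree_monomial_le _).trans (Nat.lt_succ_iff.mp e.1.isLt)
  · exact natDegree_zero.trans_le (Nat.zero_le _)

end Expansion

/-- The toric code of the rectangle `[0,k] × [0,ℓ]` over `F_q` has minimum distance
exactly `((q-1) - k) * ((q-1) - ℓ)`. -/
theorem rect_toric_code_min_dist {F : Type*} [Field F] [Fintype F]
    (q k l : ℕ) (hq : Fintype.card F = q) (hk : k < q - 1) (hl : l < q - 1)
    (C : Set ((Fˣ × Fˣ) → F))
    (hC : C = {w | ∃ c : Fin (k + 1) × Fin (l + 1) → F,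
      w = fun p => ∑ e : Fin (k + 1) × Fin (l + 1),
        c e * (p.1 : F) ^ (e.1 : ℕ) * (p.2 : F) ^ (e.2 : ℕ)}) :
    (∀ w ∈ C, w ≠ 0 → (q - 1 - k) * (q - 1 - l) ≤ {p | w p ≠ 0}.ncard) ∧
    (∃ w ∈ C, w ≠ 0 ∧ {p | w p ≠ 0}.ncard = (q - 1 - k) * (q - 1 - l)) := by
  classical
  subst hC
  have hunits : Fintype.card Fˣ = q - 1 := by rw [Fintype.card_units, hq]
  refine ⟨?_, ?_⟩
  · rintro w ⟨c, rfl⟩ hw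
    have hP : rectanglePoly c ≠ 0 := fun h => hw (funext fun p => by
      simp [← evalEval_rectanglePoly, h])
    simp_rw [← evalEval_rectanglePoly, Set.ncard_eq_toFinset_card', Set.toFinset_ofPred]
    calc (q - 1 - k) * (q - 1 - l)
        ≤ (Fintype.card Fˣ - (rectanglePoly c).leadingCoeff.natDegree) *
            (Fintype.card Fˣ - (rectanglePoly c).natDegree) := by
          rw [hunits]
          gcongr
          exacts [natDegree_coeff_rectanglePoly_le c _, natDegree_rectanglePoly_le c]
      _ ≤ _ := card_sub_mul_card_sub_le_card_filter_evalEval_ne_zero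
          Units.val_injective Units.val_injective hP
  · obtain ⟨u, hu_deg, hu_card⟩ := exists_natDegree_eq_card_filter_eval_ne_zero
      (k := k) Units.val_injective (hunits.symm ▸ hk.le)
    obtain ⟨v, hv_deg, hv_card⟩ := exists_natDegree_eq_card_filter_eval_ne_zero
      (k := l) Units.val_injective (hunits.symm ▸ hl.le)
    have hcard :
        {p : Fˣ × Fˣ | u.eval ↑p.1 * v.eval ↑p.2 ≠ 0}.ncard = (q - 1 - k) * (q - 1 - l) := by
      rw [Set.ncard_eq_toFinset_card', Set.toFinset_ofPred,
        card_filter_mul_ne_zero (fun i : Fˣ => u.eval ↑i) (fun j : Fˣ => v.eval ↑j), hu_card,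
        hv_card, hunits]
    obtain ⟨p, hp⟩ :=
      Set.nonempty_of_ncard_ne_zero (hcard.trans_ne (Nat.mul_ne_zero (by omega) (by omega)))
    refine ⟨fun p => u.eval ↑p.1 * v.eval ↑p.2, ⟨fun e => u.coeff e.1 * v.coeff e.2,
      funext fun p => eval_mul_eval_eq_sum_fin_prod hu_deg.le hv_deg.le _ _⟩,
      fun h => hp (congrFun h p), hcard⟩
end

section
/- Let F be a field, m ≥ 1, ℓ ≥ 0, and let S ⊆ F^m be an m-dimensional ℓ-th order simplicial configuration (defined recursively: for m = 1, any set of ℓ+1 distinct points in F; for m ≥ 2, a set of C(m+ℓ, ℓ) points lying on ℓ+1 distinct hyperplanes x_m = a_1, ..., x_m = a_{ℓ+1}, with exactly C(m−1+j−1, j−1) points on x_m = a_j whose projections to the first m−1 coordinates form an (m−1)-dimensional simplicial configuration of order j−1). Then the C(m+ℓ,ℓ) × C(m+ℓ,ℓ) matrix V(P_ℓ(m); S), with rows indexed by exponent vectors e ∈ Z_{≥0}^m with e_1 + ... + e_m ≤ ℓ and columns indexed by points p ∈ S, with entry p^e = ∏_i p_i^{e_i}, is nonsingular. -/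
/-!
Monomials of total degree `≤ ℓ` are linearly independent as functions on `S` as soon as no
nonzero polynomial of total degree `≤ ℓ` vanishes on `S`. For a simplicial configuration this goes
by induction on the dimension and the order. Restricted to the hyperplane `x_last = a` carrying the
largest slice, such a polynomial `P` becomes a polynomial in one variable less vanishing on a
configuration of the same order, hence zero; so `x_last - a` divides `P`, and the quotient has
total degree `≤ ℓ - 1` and vanishes on the other slices, which form a configuration of order
`ℓ - 1`.
-/

/-- `IsSimplicialConfig F m ℓ S` : `S` is an `(m+1)`-dimensional simplicial configuration
of order `ℓ` (so the actual dimension is `m + 1 ≥ 1`).  For dimension `1` it is any set of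
`ℓ + 1` distinct points; in higher dimension `S` consists of `C((m+1)+ℓ, ℓ)` points lying
on `ℓ+1` distinct hyperplanes `x_last = a j`, with exactly `C(m + 1 + j, j)` points on the
`j`-th hyperplane (indexing `j = 0, ..., ℓ`), whose projections to the first coordinates
form a lower-dimensional simplicial configuration of order `j`. -/
def IsSimplicialConfig (F : Type*) [DecidableEq F] :
    (m : ℕ) → (l : ℕ) → Finset (Fin (m + 1) → F) → Prop
  | 0, l, S => S.card = l + 1
  | m + 1, l, S =>
      S.card = Nat.choose (m + 2 + l) l ∧
      ∃ a : Fin (l + 1) → F, Function.Injective a ∧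
        (∀ p ∈ S, ∃ j, p (Fin.last (m + 1)) = a j) ∧
        ∀ j : Fin (l + 1),
          (S.filter fun p => p (Fin.last (m + 1)) = a j).card
            = Nat.choose (m + 1 + (j : ℕ)) (j : ℕ) ∧
          IsSimplicialConfig F m (j : ℕ)
            ((S.filter fun p => p (Fin.last (m + 1)) = a j).image fun p => p ∘ Fin.castSucc)

open MvPolynomial

namespace MvPolynomial

section CommSemiring

variable {R : Type*} [CommSemiring R]

theorem totalDegree_eval_C_le {σ : Type*} (Φ : Polynomial (MvPolynomial σ R)) (c : R) {d : ℕ}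
    (h : ∀ k, (Φ.coeff k).totalDegree ≤ d) : (Φ.eval (C c)).totalDegree ≤ d := by
  rw [Polynomial.eval_eq_sum_range]
  refine (totalDegree_finsetSum _ _).trans (Finset.sup_le fun k _ => ?_)
  calc (Φ.coeff k * C c ^ k).totalDegree
      ≤ (Φ.coeff k).totalDegree + (C c ^ k : MvPolynomial σ R).totalDegree := totalDegree_mul _ _
    _ ≤ d := by rw [← map_pow, totalDegree_C, add_zero]; exact h k

variable (R) in
noncomputable def finSuccLastEquiv (n : ℕ) :
    MvPolynomial (Fin (n + 1)) R ≃ₐ[R] Polynomial (MvPolynomial (Fin n) R) :=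
  (renameEquiv R finSuccEquivLast).trans (optionEquivLeft R (Fin n))

theorem eval_eq_eval_map_finSuccLastEquiv {n : ℕ} (x : Fin (n + 1) → R)
    (P : MvPolynomial (Fin (n + 1)) R) :
    eval x P =
      ((finSuccLastEquiv R n P).map (eval (x ∘ Fin.castSucc))).eval (x (Fin.last n)) := by
  set g : Option (Fin n) → R := fun o => o.elim (x (Fin.last n)) (x ∘ Fin.castSucc)
  have hg : g ∘ finSuccEquivLast = x := by
    funext i
    induction i using Fin.lastCases <;> simp [g]
  calc eval x P = eval (g ∘ finSuccEquivLast) P := by rw [hg]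
    _ = eval g (rename finSuccEquivLast P) := (eval_rename _ _ _).symm
    _ = _ := optionEquivLeft_elim_eval R (Fin n) _ _ _

theorem totalDegree_coeff_finSuccLastEquiv_le {n : ℕ} (P : MvPolynomial (Fin (n + 1)) R)
    (k : ℕ) : ((finSuccLastEquiv R n P).coeff k).totalDegree ≤ P.totalDegree :=
  (totalDegree_coeff_optionEquivLeft_le (R := R) _ _ k).trans (totalDegree_renameEquiv _ _).le

end CommSemiring

section CommRing

variable {R : Type*} [CommRing R]

theorem finSuccLastEquiv_symm_X_sub_C {n : ℕ} (c : R) :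
    (finSuccLastEquiv R n).symm (Polynomial.X - Polynomial.C (C c)) = X (Fin.last n) - C c := by
  apply (finSuccLastEquiv R n).injective
  simp [finSuccLastEquiv, optionEquivLeft_X_none, optionEquivLeft_C]

theorem totalDegree_X_sub_C [Nontrivial R] {σ : Type*} (i : σ) (c : R) :
    (X i - C c : MvPolynomial σ R).totalDegree = 1 := by
  refine le_antisymm ((totalDegree_sub_C_le _ _).trans (totalDegree_X i).le) ?_
  calc 1 = (X i - C c + C c : MvPolynomial σ R).totalDegree := by
        rw [sub_add_cancel, totalDegree_X]
    _ ≤ max (X i - C c : MvPolynomial σ R).totalDegree (C c : MvPolynomial σ R).totalDegree :=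
      totalDegree_add _ _
    _ = (X i - C c : MvPolynomial σ R).totalDegree := by rw [totalDegree_C, Nat.max_zero]

theorem totalDegree_le_of_X_sub_C_mul_le [IsDomain R] {σ : Type*} {i : σ} {c : R}
    {Q : MvPolynomial σ R} {d : ℕ} (h : ((X i - C c) * Q).totalDegree ≤ d + 1) :
    Q.totalDegree ≤ d := by
  rcases eq_or_ne Q 0 with rfl | hQ
  · simp
  have hXC : (X i - C c : MvPolynomial σ R) ≠ 0 := by
    intro h0
    simpa [h0] using totalDegree_X_sub_C (R := R) i c
  rw [totalDegree_mul_of_isDomain hXC hQ, totalDegree_X_sub_C] at h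
  omega

end CommRing

end MvPolynomial

def DeterminesPolynomialsOfDegree {R σ : Type*} [CommSemiring R] (l : ℕ) (S : Finset (σ → R)) :
    Prop :=
  ∀ P : MvPolynomial σ R, P.totalDegree ≤ l → (∀ x ∈ S, eval x P = 0) → P = 0

namespace DeterminesPolynomialsOfDegree

theorem zero_of_nonempty {R σ : Type*} [CommSemiring R] {S : Finset (σ → R)}
    (hS : S.Nonempty) : DeterminesPolynomialsOfDegree 0 S := by
  intro P hP hvan
  rw [Nat.le_zero, totalDegree_eq_zero_iff_eq_C] at hP
  obtain ⟨x, hx⟩ := hS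
  have hPx := hvan x hx
  rw [hP, eval_C] at hPx
  rw [hP, hPx, map_zero]

theorem of_isEmpty {R σ : Type*} [CommSemiring R] [IsEmpty σ] {S : Finset (σ → R)}
    (hS : S.Nonempty) (l : ℕ) : DeterminesPolynomialsOfDegree l S := fun P _ hvan =>
  zero_of_nonempty hS P (by rw [eq_C_of_isEmpty P, totalDegree_C]) hvan

theorem of_hyperplane {R : Type*} [CommRing R] [IsDomain R] [DecidableEq R] {n l : ℕ}
    {S : Finset (Fin (n + 1) → R)} (c : R)
    (hon : DeterminesPolynomialsOfDegree (l + 1)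
      ((S.filter fun p => p (Fin.last n) = c).image fun p => p ∘ Fin.castSucc))
    (hoff : DeterminesPolynomialsOfDegree l (S.filter fun p => p (Fin.last n) ≠ c)) :
    DeterminesPolynomialsOfDegree (l + 1) S := by
  intro P hP hvan
  have hroot : (finSuccLastEquiv R n P).IsRoot (C c) := by
    refine hon _ (totalDegree_eval_C_le _ c fun k =>
      (totalDegree_coeff_finSuccLastEquiv_le P k).trans hP) ?_
    simp only [Finset.mem_image, Finset.mem_filter]
    rintro _ ⟨p, ⟨hpS, rfl⟩, rfl⟩
    rw [← Polynomial.eval_map_apply, eval_C, ← eval_eq_eval_map_finSuccLastEquiv]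
    exact hvan p hpS
  obtain ⟨Q, rfl⟩ : X (Fin.last n) - C c ∣ P := by
    simpa [finSuccLastEquiv_symm_X_sub_C] using
      map_dvd (finSuccLastEquiv R n).symm (Polynomial.dvd_iff_isRoot.mpr hroot)
  suffices Q = 0 by rw [this, mul_zero]
  refine hoff Q (totalDegree_le_of_X_sub_C_mul_le hP) fun p hp => ?_
  rw [Finset.mem_filter] at hp
  simpa [sub_ne_zero.mpr hp.2] using hvan p hp.1

theorem linearIndependent_eval_monomial {R σ ι : Type*} [CommRing R] [Fintype σ] {l : ℕ}
    {S : Finset (σ → R)} (hS : DeterminesPolynomialsOfDegree l S) (d : ι → σ →₀ ℕ)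
    (hd : Function.Injective d) (hdeg : ∀ i, ∑ j, d i j ≤ l) :
    LinearIndependent R fun i (p : S) => ∏ j, (p : σ → R) j ^ d i j := by
  let evalOn : MvPolynomial σ R →ₗ[R] S → R :=
    LinearMap.pi fun p => (aeval (p : σ → R)).toLinearMap
  have hdisj : Disjoint (Submodule.span R (Set.range fun i => monomial (d i) (1 : R)))
      (LinearMap.ker evalOn) := by
    rw [Submodule.disjoint_def]
    intro P hspan hker
    refine hS P ?_ fun x hx => congrFun hker ⟨x, hx⟩
    refine (mem_restrictTotalDegree _ _ _).mp (Submodule.span_le.mpr ?_ hspan)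
    rintro _ ⟨i, rfl⟩
    refine (mem_restrictTotalDegree _ _ _).mpr ((totalDegree_monomial_le _ _).trans ?_)
    rw [Finsupp.sum_fintype _ _ fun _ => rfl]
    exact hdeg i
  have hmonomial : LinearIndependent R fun i => monomial (d i) (1 : R) :=
    (basisMonomials σ R).linearIndependent.comp d hd
  have hfun : (evalOn ∘ fun i => monomial (d i) (1 : R)) =
      fun i (p : S) => ∏ j, (p : σ → R) j ^ d i j := by
    funext i p
    rw [Function.comp_apply, LinearMap.pi_apply, AlgHom.toLinearMap_apply, aeval_monomial,
      map_one, one_mul, Finsupp.prod_fintype _ _ fun _ => pow_zero _]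
  exact hfun ▸ hmonomial.map hdisj

end DeterminesPolynomialsOfDegree
namespace IsSimplicialConfig

variable {F : Type*} [DecidableEq F]

theorem nonempty :
    ∀ {m l : ℕ} {S : Finset (Fin (m + 1) → F)}, IsSimplicialConfig F m l S → S.Nonempty
  | 0, _, _, hS => Finset.card_pos.mp (by rw [hS]; omega)
  | _ + 1, _, _, hS => Finset.card_pos.mp (by rw [hS.1]; exact Nat.choose_pos (by omega))

theorem exists_split_of_dim_one {l : ℕ} {S : Finset (Fin 1 → F)}
    (hS : IsSimplicialConfig F 0 (l + 1) S) :
    ∃ c, (S.filter fun p => p (Fin.last 0) = c).Nonempty ∧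
      IsSimplicialConfig F 0 l (S.filter fun p => p (Fin.last 0) ≠ c) := by
  obtain ⟨x, hx⟩ := nonempty hS
  refine ⟨x (Fin.last 0), ⟨x, Finset.mem_filter.mpr ⟨hx, rfl⟩⟩, ?_⟩
  have hne : ∀ p : Fin 1 → F, p (Fin.last 0) ≠ x (Fin.last 0) ↔ p ≠ x := by
    intro p
    rw [not_iff_not, funext_iff, Fin.forall_fin_one]
    rfl
  have herase : (S.filter fun p => p (Fin.last 0) ≠ x (Fin.last 0)) = S.erase x := by
    ext p
    rw [Finset.mem_filter, Finset.mem_erase, hne, and_comm]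
  change (S.filter _).card = l + 1
  rw [herase, Finset.card_erase_of_mem hx, show S.card = l + 1 + 1 from hS, Nat.add_sub_cancel]

theorem exists_split {m l : ℕ} {S : Finset (Fin (m + 2) → F)}
    (hS : IsSimplicialConfig F (m + 1) (l + 1) S) :
    ∃ c, IsSimplicialConfig F m (l + 1)
        ((S.filter fun p => p (Fin.last (m + 1)) = c).image fun p => p ∘ Fin.castSucc) ∧
      IsSimplicialConfig F (m + 1) l (S.filter fun p => p (Fin.last (m + 1)) ≠ c) := by
  obtain ⟨hcard, a, ha, hcover, hslice⟩ := hS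
  have hfilter : ∀ j : Fin (l + 1),
      ((S.filter fun p => p (Fin.last (m + 1)) ≠ a (Fin.last (l + 1))).filter
        fun p => p (Fin.last (m + 1)) = a j.castSucc) =
      S.filter fun p => p (Fin.last (m + 1)) = a j.castSucc := by
    intro j
    rw [Finset.filter_filter]
    refine Finset.filter_congr fun p _ => and_iff_right_of_imp fun h => ?_
    rw [h]
    exact ha.ne (Fin.castSucc_lt_last j).ne
  refine ⟨a (Fin.last (l + 1)), by simpa using (hslice (Fin.last (l + 1))).2, ?_,
    a ∘ Fin.castSucc, ha.comp (Fin.castSucc_injective _), ?_, fun j => ?_⟩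
  · have hsplit : (S.filter fun p => p (Fin.last (m + 1)) = a (Fin.last (l + 1))).card +
        (S.filter fun p => p (Fin.last (m + 1)) ≠ a (Fin.last (l + 1))).card = S.card :=
      Finset.card_filter_add_card_filter_not _
    rw [hcard, (hslice _).1, Fin.val_last] at hsplit
    have hpascal : (m + 2 + (l + 1)).choose (l + 1) =
        (m + 2 + l).choose l + (m + 2 + l).choose (l + 1) :=
      Nat.choose_succ_succ' _ _
    rw [show m + 1 + (l + 1) = m + 2 + l by omega] at hsplit
    change (S.filter fun p => p (Fin.last (m + 1)) ≠ a (Fin.last (l + 1))).card =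
      Nat.choose (m + 2 + l) l
    omega
  · intro p hp
    rw [Finset.mem_filter] at hp
    obtain ⟨j, hj⟩ := hcover p hp.1
    obtain ⟨j', rfl⟩ := Fin.exists_castSucc_eq.mpr (ne_of_apply_ne a (hj ▸ hp.2))
    exact ⟨j', hj⟩
  · simpa only [Function.comp_apply, hfilter, Fin.val_castSucc] using hslice j.castSucc

end IsSimplicialConfig

theorem IsSimplicialConfig.determinesPolynomialsOfDegree {F : Type*} [Field F] [DecidableEq F] :
    ∀ {m l : ℕ} {S : Finset (Fin (m + 1) → F)}, IsSimplicialConfig F m l S →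
      DeterminesPolynomialsOfDegree l S
  | _, 0, _, hS => .zero_of_nonempty hS.nonempty
  | 0, _ + 1, _, hS =>
    let ⟨c, hon, hoff⟩ := hS.exists_split_of_dim_one
    .of_hyperplane c (.of_isEmpty (hon.image _) _) hoff.determinesPolynomialsOfDegree
  | _ + 1, _ + 1, _, hS =>
    let ⟨c, hon, hoff⟩ := hS.exists_split
    .of_hyperplane c hon.determinesPolynomialsOfDegree hoff.determinesPolynomialsOfDegree

/-- The Vandermonde matrix of the simplex `P_ℓ(m)` (monomials of total degree `≤ ℓ` in
`m + 1` variables) evaluated at an `(m+1)`-dimensional simplicial configuration of order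
`ℓ` is nonsingular: its rows are linearly independent. -/
theorem simplex_vandermonde_nonsingular {F : Type*} [Field F] [DecidableEq F] (m l : ℕ)
    (S : Finset (Fin (m + 1) → F)) (hS : IsSimplicialConfig F m l S) :
    LinearIndependent F
      (fun e : {e : Fin (m + 1) → Fin (l + 1) // ∑ i, ((e i : ℕ)) ≤ l} =>
        fun p : S => ∏ i, ((p : Fin (m + 1) → F) i) ^ ((e : Fin (m + 1) → Fin (l + 1)) i : ℕ)) := by
  have hinj : Function.Injective fun e : {e : Fin (m + 1) → Fin (l + 1) // ∑ i, ((e i : ℕ)) ≤ l} =>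
      Finsupp.equivFunOnFinite.symm fun i => (e.1 i : ℕ) := fun e e' h =>
    Subtype.ext (funext fun i => Fin.ext (DFunLike.congr_fun h i))
  simpa using hS.determinesPolynomialsOfDegree.linearIndependent_eval_monomial _ hinj
    fun e => by simpa using e.2
end

section
/- Let F_q be a finite field, m ≥ 2, and 0 ≤ ℓ < q−1. Every subset T ⊆ (F_q^*)^m with |T| = ℓ(q−1)^{m−1} + 1 contains an m-dimensional ℓ-th order simplicial configuration. -/
/-!
Induction on the dimension. If `T ⊆ α^(m+2)` has more than `ℓ Q^(m+1)` points, where `Q = |α|`,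
split it into the fibers over the last coordinate, each of size at most `Q^(m+1)`. Averaging shows
that for every `k ≤ ℓ` more than `ℓ - k` fibers have more than `k Q^m` points, so Hall's theorem
picks distinct values `b_0, …, b_ℓ` whose fibers have more than `j Q^m` points. By induction the
projection of the fiber over `b_j` contains a configuration of order `j`; lifting these pieces
back and taking their union gives a configuration of order `ℓ`, whose size is the hockey-stick sum.
-/

open Finset

theorem Finset.exists_injective_mem_of_sub_le_card {α : Type*} [DecidableEq α] {n : ℕ}
    (A : Fin n → Finset α) (hA : ∀ k, n - k ≤ #(A k)) :
    ∃ b : Fin n → α, Function.Injective b ∧ ∀ k, b k ∈ A k := by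
  refine (all_card_le_biUnion_card_iff_exists_injective A).1 fun s => ?_
  obtain rfl | hs := s.eq_empty_or_nonempty
  · simp
  calc #s ≤ #(Ici (s.min' hs)) := card_le_card fun k hk => mem_Ici.2 (s.min'_le k hk)
    _ = n - s.min' hs := Fin.card_Ici _
    _ ≤ #(A (s.min' hs)) := hA _
    _ ≤ #(s.biUnion A) := card_le_card (subset_biUnion_of_mem A (s.min'_mem hs))

theorem lt_add_card_filter_of_mul_lt_sum {ι : Type*} [Fintype ι] (s : ι → ℕ) {n l : ℕ}
    (hs : ∀ i, s i ≤ Fintype.card ι * n) (hsum : l * (Fintype.card ι * n) < ∑ i, s i) (k : ℕ) :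
    l < k + #{i | k * n < s i} := by
  have hle (i : ι) : s i ≤ k * n + if k * n < s i then Fintype.card ι * n else 0 := by
    have := hs i
    split_ifs <;> omega
  refine Nat.lt_of_mul_lt_mul_right (a := Fintype.card ι * n) (hsum.trans_le ?_)
  calc ∑ i, s i ≤ ∑ i, (k * n + if k * n < s i then Fintype.card ι * n else 0) :=
        sum_le_sum fun i _ => hle i
    _ = (k + #{i | k * n < s i}) * (Fintype.card ι * n) := by
        rw [sum_add_distrib, ← sum_filter, sum_const, sum_const, card_univ, smul_eq_mul,
          smul_eq_mul]
        ring

theorem Nat.sum_range_choose_add_left (m l : ℕ) :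
    ∑ j ∈ range (l + 1), (m + 1 + j).choose j = (m + 2 + l).choose l :=
  calc ∑ j ∈ range (l + 1), (m + 1 + j).choose j
      = ∑ j ∈ range (l + 1), (j + (m + 1)).choose (m + 1) :=
        sum_congr rfl fun j _ => by rw [add_comm, Nat.choose_symm_add]
    _ = (m + 2 + l).choose l := by
        rw [Nat.sum_range_add_choose, show l + (m + 1) + 1 = m + 2 + l by ring,
          Nat.choose_symm_add]

theorem injOn_comp_castSucc {α : Type*} {n : ℕ} (c : α) :
    Set.InjOn (fun p : Fin (n + 1) → α => p ∘ Fin.castSucc) {p | p (Fin.last n) = c} := by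
  intro p hp p' hp' h
  funext i
  exact Fin.lastCases (hp.trans hp'.symm) (fun i => congrFun h i) i

namespace IsSimplicialConfig

variable {α : Type*} [DecidableEq α]

theorem card_eq : ∀ {m l : ℕ} {S : Finset (Fin (m + 1) → α)},
    IsSimplicialConfig α m l S → #S = (m + 1 + l).choose l
  | 0, l, S, h => by rw [h, zero_add, ← Nat.choose_symm_add, Nat.choose_one_right, add_comm]
  | _ + 1, _, _, h => h.1

theorem biUnion_of_fibers {m l : ℕ} (b : Fin (l + 1) → α) (hb : Function.Injective b)
    (S : Fin (l + 1) → Finset (Fin (m + 2) → α))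
    (hlast : ∀ j, ∀ p ∈ S j, p (Fin.last (m + 1)) = b j)
    (hS : ∀ j : Fin (l + 1), IsSimplicialConfig α m j ((S j).image fun p => p ∘ Fin.castSucc)) :
    IsSimplicialConfig α (m + 1) l (univ.biUnion S) := by
  have hfiber (j : Fin (l + 1)) : (univ.biUnion S).filter (fun p => p (Fin.last (m + 1)) = b j) = S j := by
    ext p
    simp only [mem_filter, mem_biUnion, mem_univ, true_and]
    refine ⟨fun ⟨⟨i, hpi⟩, hpj⟩ => ?_, fun hp => ⟨⟨j, hp⟩, hlast j p hp⟩⟩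
    rwa [← hb ((hlast i p hpi).symm.trans hpj)]
  have hcard (j : Fin (l + 1)) : #(S j) = (m + 1 + j).choose j := by
    rw [← card_image_of_injOn ((injOn_comp_castSucc (b j)).mono (hlast j)), (hS j).card_eq]
  refine ⟨?_, b, hb, fun p hp => ?_, fun j => ?_⟩
  · rw [card_biUnion fun i _ j _ hij => disjoint_left.2 fun p hpi hpj =>
      hij (hb ((hlast i p hpi).symm.trans (hlast j p hpj)))]
    simp_rw [hcard]
    rw [Fin.sum_univ_eq_sum_range (fun j => (m + 1 + j).choose j), Nat.sum_range_choose_add_left]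
  · obtain ⟨j, -, hpj⟩ := mem_biUnion.1 hp
    exact ⟨j, hlast j p hpj⟩
  · rw [hfiber]
    exact ⟨hcard j, hS j⟩

theorem exists_subset_of_lt_card [Fintype α] : ∀ (m l : ℕ) (T : Finset (Fin (m + 1) → α)),
    l * Fintype.card α ^ m < #T → ∃ S ⊆ T, IsSimplicialConfig α m l S
  | 0, l, T, hT => by
    obtain ⟨S, hST, hS⟩ := exists_subset_card_eq (show l + 1 ≤ #T by simpa using hT)
    exact ⟨S, hST, hS⟩
  | m + 1, l, T, hT => by
    let proj : (Fin (m + 2) → α) → Fin (m + 1) → α := fun p => p ∘ Fin.castSucc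
    let fiber (c : α) : Finset (Fin (m + 2) → α) := T.filter fun p => p (Fin.last (m + 1)) = c
    have hproj (c) : #((fiber c).image proj) = #(fiber c) :=
      card_image_of_injOn ((injOn_comp_castSucc c).mono fun p hp => (mem_filter.1 hp).2)
    have hsize (c) : #(fiber c) ≤ Fintype.card α * Fintype.card α ^ m := by
      rw [← hproj, ← pow_succ']
      exact (card_le_univ _).trans_eq (by simp)
    have hsum : l * (Fintype.card α * Fintype.card α ^ m) < ∑ c, #(fiber c) := by
      rwa [← card_eq_sum_card_fiberwise fun p _ => mem_univ _, ← pow_succ']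
    obtain ⟨b, hb, hbig⟩ := exists_injective_mem_of_sub_le_card
      (fun k : Fin (l + 1) => {c | k * Fintype.card α ^ m < #(fiber c)})
      fun k => by have := lt_add_card_filter_of_mul_lt_sum _ hsize hsum k; omega
    have hlift (j : Fin (l + 1)) : ∃ S ⊆ fiber (b j), IsSimplicialConfig α m j (S.image proj) := by
      obtain ⟨S', hS'T, hS'⟩ := exists_subset_of_lt_card m j ((fiber (b j)).image proj)
        (by rw [hproj]; exact (mem_filter.1 (hbig j)).2)
      obtain ⟨S, hS, rfl⟩ := subset_image_iff.1 hS'T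
      exact ⟨S, hS, hS'⟩
    choose S hSfiber hS using hlift
    exact ⟨univ.biUnion S, biUnion_subset.2 fun j _ => (hSfiber j).trans (filter_subset _ _),
      biUnion_of_fibers b hb S (fun j p hp => (mem_filter.1 (hSfiber j hp)).2) hS⟩

end IsSimplicialConfig

theorem contains_simplicial_configuration_general {F : Type*} [Field F] [Fintype F] [DecidableEq F]
    (q m l : ℕ) (hq : Fintype.card F = q)
    (T : Finset (Fin (m + 2) → Fˣ)) (hT : T.card = l * (q - 1) ^ (m + 1) + 1) :
    ∃ S ⊆ T, IsSimplicialConfig Fˣ (m + 1) l S :=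
  IsSimplicialConfig.exists_subset_of_lt_card (m + 1) l T
    (by rw [hT, Fintype.card_units, hq]; omega)

/-- Every subset `T ⊆ (F_q^*)^{m+2}` (ambient dimension `m + 2 ≥ 2`) with
`|T| = ℓ(q-1)^{m+1} + 1` contains an `(m+2)`-dimensional simplicial configuration of
order `ℓ`. -/
theorem contains_simplicial_configuration {F : Type*} [Field F] [Fintype F] [DecidableEq F]
    (q m l : ℕ) (hq : Fintype.card F = q) (hl : l < q - 1)
    (T : Finset (Fin (m + 2) → Fˣ)) (hT : T.card = l * (q - 1) ^ (m + 1) + 1) :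
    ∃ S ⊆ T, IsSimplicialConfig Fˣ (m + 1) l S :=
  contains_simplicial_configuration_general q m l hq T hT
end

section
/- Let F_q be a finite field, m ≥ 1, and 0 ≤ ℓ < q−1. The toric code C_{P_ℓ(m)} over F_q, obtained by evaluating the span of all monomials x_1^{e_1}···x_m^{e_m} with e_i ≥ 0 and e_1 + ... + e_m ≤ ℓ at all points of (F_q^*)^m, has minimum distance exactly (q−1)^m − ℓ(q−1)^{m−1}. -/
/-!
A codeword is the evaluation on the torus `(F_q^*)^m` of a polynomial of total degree at most `ℓ`,
so by the Schwartz–Zippel lemma with `S = F_q^*` it vanishes on at most `ℓ (q-1)^(m-1)` points.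
The bound is attained by `∏_{a ∈ A} (x₁ - a)` for a set `A` of `ℓ` nonzero elements, which vanishes
exactly where `x₁ ∈ A`.
-/

open MvPolynomial Finset

section Torus

variable {R : Type*} [CommRing R] [IsDomain R] [Fintype Rˣ] {n : ℕ}

theorem ncard_torus_zeros_mul_le {f : MvPolynomial (Fin n) R} (hf : f ≠ 0) :
    {x : Fin n → Rˣ | eval (fun i => (x i : R)) f = 0}.ncard * Fintype.card Rˣ
      ≤ f.totalDegree * Fintype.card Rˣ ^ n := by
  classical
  set S : Finset R := univ.image (Units.val : Rˣ → R)
  have hS : #S = Fintype.card Rˣ := card_image_of_injective _ Units.val_injective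
  have hzeros : {x : Fin n → Rˣ | eval (fun i => (x i : R)) f = 0}.ncard
      = #{y ∈ Fintype.piFinset fun _ => S | eval y f = 0} := by
    rw [Set.ncard_eq_toFinset_card', Set.toFinset_ofPred, Fintype.piFinset_image,
      Fintype.piFinset_univ, filter_image, card_image_of_injective]
    exact fun x y h => funext fun i => Units.val_injective (congrFun h i)
  have hpos : (0 : ℚ≥0) < #S := by rw [hS]; exact_mod_cast Fintype.card_pos
  have hsz := schwartz_zippel_totalDegree hf S
  rw [div_le_div_iff₀ (pow_pos hpos n) hpos] at hsz
  rw [hzeros, ← hS]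
  exact_mod_cast hsz

theorem card_units_pow_sub_le_ncard_torus_support {f : MvPolynomial (Fin n) R} (hf : f ≠ 0) :
    Fintype.card Rˣ ^ n - f.totalDegree * Fintype.card Rˣ ^ (n - 1)
      ≤ {x : Fin n → Rˣ | eval (fun i => (x i : R)) f ≠ 0}.ncard := by
  have hzeros := ncard_torus_zeros_mul_le hf
  have hk : 0 < Fintype.card Rˣ := Fintype.card_pos
  have hzeros_le : {x : Fin n → Rˣ | eval (fun i => (x i : R)) f = 0}.ncard
      ≤ f.totalDegree * Fintype.card Rˣ ^ (n - 1) := by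
    rcases Nat.eq_zero_or_pos n with rfl | hn
    · simpa using (Nat.le_mul_of_pos_right _ hk).trans hzeros
    · rw [← pow_sub_one_mul hn.ne', ← mul_assoc] at hzeros
      exact Nat.le_of_mul_le_mul_right hzeros hk
  have hcompl := Set.ncard_compl {x : Fin n → Rˣ | eval (fun i => (x i : R)) f = 0}
  rw [Set.compl_ofPred, Nat.card_eq_fintype_card, Fintype.card_fun, Fintype.card_fin] at hcompl
  rw [hcompl]
  omega

end Torus

theorem ncard_setOf_apply_mem {ι α : Type*} [Fintype ι] [DecidableEq ι] [Fintype α]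
    (i : ι) (B : Finset α) :
    {p : ι → α | p i ∈ B}.ncard = #B * Fintype.card α ^ (Fintype.card ι - 1) := by
  have hbox : {p : ι → α | p i ∈ B}
      = ↑(Fintype.piFinset (Function.update (fun _ => (univ : Finset α)) i B)) := by
    ext p
    rw [Finset.mem_coe, Fintype.mem_piFinset,
      Function.forall_update_iff _ fun j (s : Finset α) => p j ∈ s]
    simp
  rw [hbox, Set.ncard_coe_finset, Fintype.card_piFinset, ← mul_prod_erase _ _ (mem_univ i),
    Function.update_self,
    prod_congr rfl fun j hj => by rw [Function.update_of_ne (ne_of_mem_erase hj)],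
    prod_const, card_erase_of_mem (mem_univ i), card_univ, card_univ]

theorem totalDegree_prod_X_sub_C_le {R σ ι : Type*} [CommRing R] [Nontrivial R] (i : σ)
    (A : Finset ι) (a : ι → R) : (∏ j ∈ A, (X i - C (a j))).totalDegree ≤ #A :=
  calc (∏ j ∈ A, (X i - C (a j))).totalDegree
      ≤ ∑ j ∈ A, (X i - C (a j) : MvPolynomial σ R).totalDegree := totalDegree_finsetProd _ _
    _ ≤ ∑ _j ∈ A, 1 :=
      sum_le_sum fun j _ => (totalDegree_sub_C_le _ _).trans (totalDegree_X i).le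
    _ = #A := by rw [sum_const, smul_eq_mul, mul_one]

theorem ncard_torus_support_prod_X_sub_C {R : Type*} [CommRing R] [IsDomain R] [Fintype Rˣ]
    {n : ℕ} (i : Fin n) (A : Finset Rˣ) :
    {p : Fin n → Rˣ | eval (fun j => (p j : R)) (∏ a ∈ A, (X i - C (a : R))) ≠ 0}.ncard
      = (Fintype.card Rˣ - #A) * Fintype.card Rˣ ^ (n - 1) := by
  classical
  have hsupp : {p : Fin n → Rˣ | eval (fun j => (p j : R)) (∏ a ∈ A, (X i - C (a : R))) ≠ 0}
      = {p | p i ∈ Aᶜ} := by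
    ext p
    simp [prod_ne_zero_iff, sub_eq_zero, Units.val_inj]
  rw [hsupp, ncard_setOf_apply_mem, card_compl, Fintype.card_fin]

/-- The lattice points of `P_ℓ(m)`: the bound `e i ≤ ℓ` of `Fin (ℓ + 1)` is implied by the sum
bound. -/
abbrev SimplexExponent (m l : ℕ) := {e : Fin m → Fin (l + 1) // ∑ i, (e i : ℕ) ≤ l}

namespace SimplexExponent

variable {m l : ℕ}

noncomputable def toFinsupp (e : SimplexExponent m l) : Fin m →₀ ℕ :=
  Finsupp.equivFunOnFinite.symm fun i => e.1 i

theorem toFinsupp_injective : Function.Injective (toFinsupp : SimplexExponent m l → _) :=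
  fun _ _ h => Subtype.ext <| funext fun i => Fin.ext (DFunLike.congr_fun h i)

theorem sum_toFinsupp_le (e : SimplexExponent m l) : (e.toFinsupp.sum fun _ k => k) ≤ l := by
  rw [Finsupp.sum_fintype _ _ fun _ => rfl]
  exact e.2

theorem exists_toFinsupp_eq {s : Fin m →₀ ℕ} (hs : (s.sum fun _ k => k) ≤ l) :
    ∃ e : SimplexExponent m l, e.toFinsupp = s := by
  rw [Finsupp.sum_fintype _ _ fun _ => rfl] at hs
  have hle : ∀ i, s i ≤ l := fun i =>
    (single_le_sum (fun _ _ => Nat.zero_le _) (mem_univ i)).trans hs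
  exact ⟨⟨fun i => ⟨s i, Nat.lt_succ_of_le (hle i)⟩, hs⟩, Finsupp.ext fun _ => rfl⟩

variable {R : Type*} [CommSemiring R]

theorem eval_sum_monomial (c : SimplexExponent m l → R) (x : Fin m → R) :
    eval x (∑ e, monomial e.toFinsupp (c e)) = ∑ e, c e * ∏ i, x i ^ (e.1 i : ℕ) := by
  simp [eval_monomial, Finsupp.prod_pow, toFinsupp]

theorem totalDegree_sum_monomial_le (c : SimplexExponent m l → R) :
    (∑ e, monomial e.toFinsupp (c e)).totalDegree ≤ l :=
  (totalDegree_finsetSum _ _).trans <|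
    Finset.sup_le fun e _ => (totalDegree_monomial_le _ _).trans e.sum_toFinsupp_le

theorem sum_coeff_mul_prod_pow {f : MvPolynomial (Fin m) R} (hf : f.totalDegree ≤ l)
    (x : Fin m → R) :
    ∑ e : SimplexExponent m l, coeff e.toFinsupp f * ∏ i, x i ^ (e.1 i : ℕ) = eval x f := by
  have hsupp : f.support ⊆ univ.map ⟨toFinsupp, toFinsupp_injective⟩ := fun s hs => by
    obtain ⟨e, he⟩ := exists_toFinsupp_eq ((le_totalDegree hs).trans hf)
    exact mem_map.2 ⟨e, mem_univ _, he⟩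
  rw [eval_eq', sum_subset hsupp fun s _ hs => by rw [notMem_support_iff.1 hs, zero_mul],
    sum_map]
  rfl

end SimplexExponent

theorem simplex_toric_code_eq_setOf_totalDegree_le {R : Type*} [CommSemiring R] (m l : ℕ) :
    {w : (Fin m → Rˣ) → R | ∃ c : SimplexExponent m l → R,
        w = fun p => ∑ e, c e * ∏ i, (p i : R) ^ (e.1 i : ℕ)}
      = {w | ∃ f : MvPolynomial (Fin m) R, f.totalDegree ≤ l ∧
        w = fun p => eval (fun i => (p i : R)) f} := by
  ext w
  constructor
  · rintro ⟨c, rfl⟩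
    exact ⟨_, SimplexExponent.totalDegree_sum_monomial_le c,
      funext fun p => (SimplexExponent.eval_sum_monomial c _).symm⟩
  · rintro ⟨f, hf, rfl⟩
    exact ⟨fun e => coeff e.toFinsupp f,
      funext fun p => (SimplexExponent.sum_coeff_mul_prod_pow hf _).symm⟩

/-- The toric code of the standard simplex `P_ℓ(m) = conv{0, ℓe₁, ..., ℓe_m}` over `F_q`
(evaluating all monomials of total degree at most `ℓ`) has minimum distance exactly
`(q-1)^m - ℓ(q-1)^{m-1}`. -/
theorem simplex_toric_code_min_dist {F : Type*} [Field F] [Fintype F]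
    (q m l : ℕ) (hm : 1 ≤ m) (hq : Fintype.card F = q) (hl : l < q - 1)
    (C : Set ((Fin m → Fˣ) → F))
    (hC : C = {w | ∃ c : {e : Fin m → Fin (l + 1) // ∑ i, ((e i : ℕ)) ≤ l} → F,
      w = fun p => ∑ e, c e * ∏ i, (p i : F) ^ ((e : Fin m → Fin (l + 1)) i : ℕ)}) :
    (∀ w ∈ C, w ≠ 0 → (q - 1) ^ m - l * (q - 1) ^ (m - 1) ≤ {p | w p ≠ 0}.ncard) ∧
    (∃ w ∈ C, w ≠ 0 ∧ {p | w p ≠ 0}.ncard = (q - 1) ^ m - l * (q - 1) ^ (m - 1)) := by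
  classical
  have hk : Fintype.card Fˣ = q - 1 := by rw [Fintype.card_units, hq]
  rw [hC, simplex_toric_code_eq_setOf_totalDegree_le]
  refine ⟨?_, ?_⟩
  · rintro _ ⟨f, hf, rfl⟩ hw
    have hf0 : f ≠ 0 := by
      rintro rfl
      exact hw (funext fun _ => map_zero _)
    calc (q - 1) ^ m - l * (q - 1) ^ (m - 1)
          ≤ (q - 1) ^ m - f.totalDegree * (q - 1) ^ (m - 1) := by gcongr
      _ ≤ _ := hk ▸ card_units_pow_sub_le_ncard_torus_support hf0
  · obtain ⟨A, -, hA⟩ := exists_subset_card_eq (s := (univ : Finset Fˣ)) (n := l)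
      (by rw [card_univ, hk]; omega)
    let i : Fin m := ⟨0, hm⟩
    have hsupp := ncard_torus_support_prod_X_sub_C i A
    rw [hA, hk] at hsupp
    have hpos : 0 < (q - 1 - l) * (q - 1) ^ (m - 1) := Nat.mul_pos (by omega) (pow_pos (by omega) _)
    refine ⟨_, ⟨_, (totalDegree_prod_X_sub_C_le i A Units.val).trans hA.le, rfl⟩, ?_, ?_⟩
    · obtain ⟨p, hp⟩ := Set.nonempty_of_ncard_ne_zero (hsupp.trans_ne hpos.ne')
      exact fun hw => hp (congrFun hw p)
    · rw [hsupp, Nat.sub_mul, mul_pow_sub_one (by omega)]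
end

section
/- Let F_q be a finite field, m ≥ 1, and ℓ_1, ..., ℓ_m ≥ 1 with ℓ := max_i ℓ_i < q−1. The toric code from the simplex P_{ℓ_1,...,ℓ_m} = conv{0, ℓ_1 e_1, ..., ℓ_m e_m}, obtained by evaluating the span of monomials x^e for lattice points e in this simplex at all points of (F_q^*)^m, has minimum distance exactly (q−1)^m − ℓ(q−1)^{m−1}. -/
/-!
A lattice point `e` of the simplex satisfies `∑ eᵢ ≤ L ∑ eᵢ/ℓᵢ ≤ L`, so every codeword is the
evaluation on the torus `(F_q^*)^m` of a polynomial of total degree at most `L`. By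
Schwartz–Zippel on the `(q-1)`-element set `F_q^*` such a nonzero polynomial has at most
`L (q-1)^{m-1}` zeros there, which gives the lower bound. It is attained by
`∏_{a ∈ T} (x_{i₀} - a)` for a set `T` of `L` nonzero elements, where `ℓ_{i₀} = L`: its monomials
`x_{i₀}^k`, `k ≤ ℓ_{i₀}`, lie in the simplex, and it vanishes exactly where `x_{i₀} ∈ T`.
-/

open MvPolynomial Finset

theorem sum_le_of_sum_div_le_one {ι : Type*} [Fintype ι] {e l : ι → ℕ} {L : ℕ}
    (he : ∀ i, e i ≤ l i) (hl : ∀ i, l i ≤ L) (h : ∑ i, (e i : ℚ) / l i ≤ 1) :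
    ∑ i, e i ≤ L := by
  have key (i : ι) : (e i : ℚ) ≤ L * (e i / l i) := by
    rcases (l i).eq_zero_or_pos with hi | hi
    · simp [Nat.le_zero.mp (hi ▸ he i)]
    · rw [mul_div_assoc', le_div_iff₀ (by exact_mod_cast hi), mul_comm]
      exact mul_le_mul_of_nonneg_right (by exact_mod_cast hl i) (Nat.cast_nonneg _)
  have : (∑ i, e i : ℚ) ≤ L := calc
    (∑ i, e i : ℚ) ≤ ∑ i, L * ((e i : ℚ) / l i) := sum_le_sum fun i _ => key i
    _ = L * ∑ i, (e i : ℚ) / l i := (mul_sum ..).symm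
    _ ≤ L := mul_le_of_le_one_right (Nat.cast_nonneg _) h
  exact_mod_cast this

theorem card_filter_apply_mem {σ α : Type*} [Fintype σ] [DecidableEq σ] [Fintype α]
    [DecidableEq α] (s : Finset α) (i : σ) :
    #{p : σ → α | p i ∈ s} = #s * Fintype.card α ^ (Fintype.card σ - 1) := by
  rw [card_equiv (Equiv.funSplitAt i α) (t := s ×ˢ univ) (by simp), card_product, card_univ,
    Fintype.card_fun, Fintype.card_subtype_compl, Fintype.card_subtype_eq]

theorem setOf_exists_eq_sum_mul_eq_span {X E R : Type*} [CommSemiring R] [Fintype E]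
    (f : E → X → R) :
    {w | ∃ c : E → R, w = fun x => ∑ e, c e * f e x} = Submodule.span R (Set.range f) := by
  ext w
  rw [SetLike.mem_coe, Submodule.mem_span_range_iff_exists_fun]
  refine exists_congr fun c => ?_
  rw [eq_comm, funext_iff, funext_iff]
  simp

section Torus

variable {σ F : Type*} [Field F]

noncomputable def evalOnUnits : MvPolynomial σ F →ₗ[F] (σ → Fˣ) → F :=
  LinearMap.pi fun x => (aeval fun i => (x i : F)).toLinearMap

@[simp] theorem evalOnUnits_apply (P : MvPolynomial σ F) (x : σ → Fˣ) :
    evalOnUnits P x = eval (fun i => (x i : F)) P := by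
  simp [evalOnUnits]

theorem span_monomials_le_map_evalOnUnits [Fintype σ] {E : Type*} (d : E → σ → ℕ) {L : ℕ}
    (hd : ∀ e, ∑ i, d e i ≤ L) :
    Submodule.span F (Set.range fun e (x : σ → Fˣ) => ∏ i, (x i : F) ^ d e i) ≤
      (restrictTotalDegree σ F L).map evalOnUnits := by
  rw [Submodule.span_le]
  rintro _ ⟨e, rfl⟩
  refine ⟨∏ i, X i ^ d e i, ?_, by ext x; simp⟩
  rw [SetLike.mem_coe, mem_restrictTotalDegree]
  refine (totalDegree_finsetProd _ _).trans ?_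
  simpa [totalDegree_X_pow] using hd e

theorem card_filter_evalOnUnits_eq_zero_le [Fintype F] [DecidableEq F] {n : ℕ} (hn : n ≠ 0)
    {P : MvPolynomial (Fin n) F} (hP : P ≠ 0) :
    #{x | evalOnUnits P x = 0} ≤ P.totalDegree * (Fintype.card F - 1) ^ (n - 1) := by
  set S : Finset F := univ.erase 0
  have hS : #S = Fintype.card F - 1 := by
    rw [card_erase_of_mem (mem_univ _), card_univ]
  have hSpos : 0 < #S := card_pos.mpr ⟨1, by simp [S]⟩
  have hunits : #{x | evalOnUnits P x = 0} ≤
      #{f ∈ Fintype.piFinset fun _ => S | eval f P = 0} := by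
    refine card_le_card_of_injOn (fun x i => (x i : F)) (fun x hx => ?_) fun x _ y _ hxy => ?_
    · simp_all [S]
    · exact funext fun i => Units.ext (congrFun hxy i)
  have hSZ := schwartz_zippel_totalDegree hP S
  rw [div_le_div_iff₀ (by positivity) (by positivity)] at hSZ
  have hSZ' : #{f ∈ Fintype.piFinset fun _ => S | eval f P = 0} * #S ≤
      P.totalDegree * #S ^ (n - 1) * #S := by
    rw [mul_assoc, ← pow_succ, Nat.sub_add_cancel (Nat.one_le_iff_ne_zero.mpr hn)]
    exact_mod_cast hSZ
  exact hS ▸ hunits.trans (Nat.le_of_mul_le_mul_right hSZ' hSpos)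

theorem sub_le_ncard_evalOnUnits_ne_zero [Fintype F] {n : ℕ} (hn : n ≠ 0)
    {P : MvPolynomial (Fin n) F} (hP : P ≠ 0) :
    (Fintype.card F - 1) ^ n - P.totalDegree * (Fintype.card F - 1) ^ (n - 1) ≤
      {x | evalOnUnits P x ≠ 0}.ncard := by
  classical
  have hzeros := card_filter_evalOnUnits_eq_zero_le hn hP
  have hsplit := card_filter_add_card_filter_not (s := univ) fun x => evalOnUnits P x = 0
  rw [card_univ, Fintype.card_fun, Fintype.card_units, Fintype.card_fin] at hsplit
  rw [Set.ncard_eq_toFinset_card', Set.toFinset_ofPred]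
  simp only [ne_eq]
  omega

theorem polynomial_eval_apply_mem_span_monomials [Fintype σ] [DecidableEq σ] {E : Type*}
    (d : E → σ → ℕ) (i₀ : σ) (Q : Polynomial F)
    (hQ : ∀ k ≤ Q.natDegree, ∃ e, d e = Pi.single i₀ k) :
    (fun x : σ → Fˣ => Q.eval (x i₀ : F)) ∈
      Submodule.span F (Set.range fun e (x : σ → Fˣ) => ∏ i, (x i : F) ^ d e i) := by
  have hsum : (fun x : σ → Fˣ => Q.eval (x i₀ : F)) =
      ∑ k ∈ range (Q.natDegree + 1), Q.coeff k • fun x : σ → Fˣ => (x i₀ : F) ^ k := by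
    ext x
    simp [Polynomial.eval_eq_sum_range]
  rw [hsum]
  refine Submodule.sum_mem _ fun k hk => Submodule.smul_mem _ _ (Submodule.subset_span ?_)
  obtain ⟨e, he⟩ := hQ k (Nat.lt_succ_iff.mp (mem_range.mp hk))
  exact ⟨e, funext fun x => by simp [he, Pi.single_apply]⟩

theorem ncard_eval_prod_X_sub_C_ne_zero [Fintype σ] [DecidableEq σ] [Fintype F]
    [DecidableEq F] (T : Finset Fˣ) (i₀ : σ) :
    {x : σ → Fˣ | (∏ a ∈ T, (Polynomial.X - Polynomial.C (a : F))).eval (x i₀ : F) ≠ 0}.ncard =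
      (Fintype.card F - 1 - #T) * (Fintype.card F - 1) ^ (Fintype.card σ - 1) := by
  rw [← Fintype.card_units, ← card_compl, ← card_filter_apply_mem Tᶜ i₀,
    Set.ncard_eq_toFinset_card', Set.toFinset_ofPred]
  congr 1
  ext x
  simp [Polynomial.eval_prod, prod_eq_zero_iff, sub_eq_zero, Units.val_inj]

end Torus

/-- The lattice points of `P_{ℓ} = conv{0, ℓ₁e₁, …, ℓₘeₘ}`. -/
abbrev SimplexLatticePoint {ι : Type*} [Fintype ι] (l : ι → ℕ) :=
  {e : ∀ i, Fin (l i + 1) // ∑ i, ((e i : ℕ) : ℚ) / ((l i : ℕ) : ℚ) ≤ 1}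

theorem SimplexLatticePoint.sum_le {ι : Type*} [Fintype ι] {l : ι → ℕ} {L : ℕ}
    (hl : ∀ i, l i ≤ L) (e : SimplexLatticePoint l) : ∑ i, (e.1 i : ℕ) ≤ L :=
  sum_le_of_sum_div_le_one (fun _ => Fin.is_le _) hl e.2

theorem SimplexLatticePoint.exists_eq_single {ι : Type*} [Fintype ι] [DecidableEq ι]
    (l : ι → ℕ) (i₀ : ι) {k : ℕ} (hk : k ≤ l i₀) :
    ∃ e : SimplexLatticePoint l, (fun i => (e.1 i : ℕ)) = Pi.single i₀ k := by
  let e : ∀ i, Fin (l i + 1) := Pi.single i₀ ⟨k, Nat.lt_succ_of_le hk⟩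
  have hsingle (i : ι) : (e i : ℕ) = (Pi.single i₀ k : ι → ℕ) i :=
    Pi.apply_single (fun i (a : Fin (l i + 1)) => (a : ℕ)) (fun _ => rfl) i₀ _ i
  refine ⟨⟨e, ?_⟩, funext hsingle⟩
  simp only [hsingle]
  rw [Fintype.sum_eq_single i₀ fun i hi => by simp [hi]]
  simpa using div_le_one_of_le₀ (by exact_mod_cast hk) (Nat.cast_nonneg _)

theorem skew_simplex_toric_code_min_dist_general {F : Type*} [Field F] [Fintype F]
    (q m L : ℕ) (hq : Fintype.card F = q)
    (l : Fin m → ℕ)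
    (hmax : ∀ i, l i ≤ L) (hattained : ∃ i, l i = L) (hL : L < q - 1)
    (C : Set ((Fin m → Fˣ) → F))
    (hC : C = {w | ∃ c : {e : ∀ i, Fin (l i + 1) //
        ∑ i, ((e i : ℕ) : ℚ) / ((l i : ℕ) : ℚ) ≤ 1} → F,
      w = fun p => ∑ e, c e * ∏ i, (p i : F) ^ (((e : ∀ i, Fin (l i + 1)) i : ℕ))}) :
    (∀ w ∈ C, w ≠ 0 → (q - 1) ^ m - L * (q - 1) ^ (m - 1) ≤ {p | w p ≠ 0}.ncard) ∧
    (∃ w ∈ C, w ≠ 0 ∧ {p | w p ≠ 0}.ncard = (q - 1) ^ m - L * (q - 1) ^ (m - 1)) := by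
  classical
  obtain ⟨i₀, hi₀⟩ := hattained
  subst hq
  have hm : m ≠ 0 := (Fin.pos i₀).ne'
  have hC' : C = Submodule.span F (Set.range
      fun (e : SimplexLatticePoint l) (p : Fin m → Fˣ) => ∏ i, (p i : F) ^ (e.1 i : ℕ)) :=
    hC.trans (setOf_exists_eq_sum_mul_eq_span _)
  refine ⟨fun w hw hw0 => ?_, ?_⟩
  · obtain ⟨P, hPdeg, rfl⟩ :=
      span_monomials_le_map_evalOnUnits _ (SimplexLatticePoint.sum_le hmax) (hC' ▸ hw)
    rw [SetLike.mem_coe, mem_restrictTotalDegree] at hPdeg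
    have hP : P ≠ 0 := by rintro rfl; exact hw0 (map_zero _)
    exact (Nat.sub_le_sub_left (Nat.mul_le_mul_right _ hPdeg) _).trans
      (sub_le_ncard_evalOnUnits_ne_zero hm hP)
  · obtain ⟨T, -, hT⟩ := exists_subset_card_eq (s := (univ : Finset Fˣ)) (n := L)
      (by rw [card_univ, Fintype.card_units]; exact hL.le)
    set Q : Polynomial F := ∏ a ∈ T, (Polynomial.X - Polynomial.C (a : F))
    have hQ : Q.natDegree = L := by simp [Q, hT]
    have hcount := ncard_eval_prod_X_sub_C_ne_zero T i₀
    rw [Fintype.card_fin, hT] at hcount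
    have hpos : 0 < (Fintype.card F - 1 - L) * (Fintype.card F - 1) ^ (m - 1) :=
      Nat.mul_pos (Nat.sub_pos_of_lt hL) (pow_pos (by omega) _)
    refine ⟨fun p => Q.eval (p i₀ : F), ?_, ?_, ?_⟩
    · rw [hC']
      exact polynomial_eval_apply_mem_span_monomials _ i₀ Q fun k hk =>
        SimplexLatticePoint.exists_eq_single l i₀ (by omega)
    · obtain ⟨x, hx⟩ := Set.nonempty_of_ncard_ne_zero (hcount.trans_ne hpos.ne')
      exact fun h0 => hx (congrFun h0 x)
    · rw [hcount, Nat.sub_mul, ← pow_succ', Nat.sub_add_cancel (Nat.one_le_iff_ne_zero.mpr hm)]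

/-- The toric code of the simplex `P_{ℓ₁,...,ℓ_m} = conv{0, ℓ₁e₁, ..., ℓ_m e_m}` over
`F_q` (evaluating the monomials `x^e` with `e ∈ ℕ^m`, `∑ i, e i / ℓ i ≤ 1`) has minimum
distance exactly `(q-1)^m - L(q-1)^{m-1}`, where `L = max_i ℓ i`. -/
theorem skew_simplex_toric_code_min_dist {F : Type*} [Field F] [Fintype F]
    (q m L : ℕ) (hm : 1 ≤ m) (hq : Fintype.card F = q)
    (l : Fin m → ℕ) (hl1 : ∀ i, 1 ≤ l i)
    (hmax : ∀ i, l i ≤ L) (hattained : ∃ i, l i = L) (hL : L < q - 1)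
    (C : Set ((Fin m → Fˣ) → F))
    (hC : C = {w | ∃ c : {e : ∀ i, Fin (l i + 1) //
        ∑ i, ((e i : ℕ) : ℚ) / ((l i : ℕ) : ℚ) ≤ 1} → F,
      w = fun p => ∑ e, c e * ∏ i, (p i : F) ^ (((e : ∀ i, Fin (l i + 1)) i : ℕ))}) :
    (∀ w ∈ C, w ≠ 0 → (q - 1) ^ m - L * (q - 1) ^ (m - 1) ≤ {p | w p ≠ 0}.ncard) ∧
    (∃ w ∈ C, w ≠ 0 ∧ {p | w p ≠ 0}.ncard = (q - 1) ^ m - L * (q - 1) ^ (m - 1)) :=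
  skew_simplex_toric_code_min_dist_general q m L hq l hmax hattained hL C hC
end

section
/- Let F_q be a finite field and P_1, P_2 ⊂ [0, q−2]^m integral convex polytopes (or more generally finite sets of lattice points) related by a unimodular integer affine transformation T(x) = Mx + λ with M ∈ GL(m,Z), λ ∈ Z^m, T(P_1 ∩ Z^m) = P_2 ∩ Z^m. Then the toric codes C_{P_1}(F_q) and C_{P_2}(F_q) are monomially equivalent: there is a permutation σ of (F_q^*)^m and nonzero scalars (c_p)_{p ∈ (F_q^*)^m} such that the map sending a codeword (w_p) to (c_p · w_{σ(p)}) is a linear bijection from C_{P_1} to C_{P_2}. -/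
/-- The monomial transformation of `F^ι` determined by nonzero scalars `c` and a
permutation `σ` of the coordinates. -/
def monomialMap {F : Type*} [Field F] {ι : Type*} (c : ι → Fˣ) (σ : Equiv.Perm ι) :
    (ι → F) →ₗ[F] (ι → F) where
  toFun w := fun i => (c i : F) * w (σ i)
  map_add' := by intro x y; funext i; simp [mul_add]
  map_smul' := by intro r x; funext i; simp [smul_eq_mul]; ring

/-!
An integer matrix `M` acts on the torus `(F^*)^m` by `p ↦ (∏ i, p i ^ M i j)_j`, and the monomial
`x^e` composed with this map is the monomial `x^(M e)`; multiplying by `x^λ` gives `x^(M e + λ)`.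
For unimodular `M` the map is a bijection of the torus, so permuting coordinates by it and scaling
by `x^λ(p)` sends the generators `ev(x^e)` of one code exactly onto those of the other.
-/

open scoped Matrix

theorem Finset.prod_zpow_eq_zpow_sum {G ι : Type*} [CommGroup G] (s : Finset ι) (f : ι → ℤ)
    (a : G) : ∏ i ∈ s, a ^ f i = a ^ ∑ i ∈ s, f i :=
  Finset.cons_induction (by simp) (fun _ _ _ _ ↦ by simp [Finset.prod_cons, Finset.sum_cons,
    zpow_add, *]) s

section Torus

variable {G : Type*} [CommGroup G] {ι : Type*} [Fintype ι]

def torusMonomial (e : ι → ℤ) (p : ι → G) : G :=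
  ∏ i, p i ^ e i

theorem torusMonomial_add (e f : ι → ℤ) (p : ι → G) :
    torusMonomial (e + f) p = torusMonomial e p * torusMonomial f p := by
  simp only [torusMonomial, Pi.add_apply, zpow_add, Finset.prod_mul_distrib]

def Matrix.torusMap (M : Matrix ι ι ℤ) (p : ι → G) : ι → G :=
  fun j => ∏ i, p i ^ M i j

theorem torusMonomial_torusMap (M : Matrix ι ι ℤ) (e : ι → ℤ) (p : ι → G) :
    torusMonomial e (M.torusMap p) = torusMonomial (M *ᵥ e) p := by
  simp only [torusMonomial, Matrix.torusMap, Matrix.mulVec, dotProduct, ← Finset.prod_zpow,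
    ← zpow_mul, ← Finset.prod_zpow_eq_zpow_sum]
  exact Finset.prod_comm

theorem Matrix.torusMap_mul (M N : Matrix ι ι ℤ) (p : ι → G) :
    (M * N).torusMap p = N.torusMap (M.torusMap p) := by
  funext j
  exact (torusMonomial_torusMap M (fun i => N i j) p).symm

theorem Matrix.torusMap_one [DecidableEq ι] (p : ι → G) : (1 : Matrix ι ι ℤ).torusMap p = p := by
  funext j
  simp [Matrix.torusMap, Matrix.one_apply]

def Matrix.torusPerm [DecidableEq ι] (U : (Matrix ι ι ℤ)ˣ) : Equiv.Perm (ι → G) where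
  toFun := (U : Matrix ι ι ℤ).torusMap
  invFun := (↑U⁻¹ : Matrix ι ι ℤ).torusMap
  left_inv p := by rw [← Matrix.torusMap_mul, Units.mul_inv, Matrix.torusMap_one]
  right_inv p := by rw [← Matrix.torusMap_mul, Units.inv_mul, Matrix.torusMap_one]

end Torus

section ToricCode

variable {F : Type*} [Field F] {ι : Type*} [Fintype ι] [DecidableEq ι]

/-- The paper's `ev(x^e)`. -/
def monomialEval (e : ι → ℤ) : (ι → Fˣ) → F :=
  fun p => (torusMonomial e p : Fˣ)

theorem monomialMap_monomialEval (U : (Matrix ι ι ℤ)ˣ) (lam e : ι → ℤ) :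
    monomialMap (torusMonomial lam) (Matrix.torusPerm U) (monomialEval e : (ι → Fˣ) → F) =
      monomialEval ((U : Matrix ι ι ℤ) *ᵥ e + lam) := by
  funext p
  simp only [monomialMap, LinearMap.coe_mk, AddHom.coe_mk, monomialEval, Matrix.torusPerm,
    Equiv.coe_fn_mk, torusMonomial_torusMap, torusMonomial_add, Units.val_mul, mul_comm]

theorem map_span_monomialEval (U : (Matrix ι ι ℤ)ˣ) (lam : ι → ℤ) (P : Set (ι → ℤ)) :
    (Submodule.span F (monomialEval '' P)).map
        (monomialMap (torusMonomial lam) (Matrix.torusPerm U)) =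
      Submodule.span F (monomialEval '' ((fun e => (U : Matrix ι ι ℤ) *ᵥ e + lam) '' P)) := by
  rw [Submodule.map_span, Set.image_image, Set.image_image]
  simp only [monomialMap_monomialEval]

end ToricCode

theorem lattice_equiv_gives_monomially_equivalent_codes_general
    {F : Type*} [Field F] (m : ℕ)
    (P₁ P₂ : Finset (Fin m → ℤ))
    (M : Matrix (Fin m) (Fin m) ℤ) (hM : M.det = 1 ∨ M.det = -1) (lam : Fin m → ℤ)
    (hT : P₁.image (fun e => M.mulVec e + lam) = P₂) :
    ∃ (σ : Equiv.Perm (Fin m → Fˣ)) (c : (Fin m → Fˣ) → Fˣ),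
      Submodule.map (monomialMap c σ)
          (Submodule.span F {w : (Fin m → Fˣ) → F |
            ∃ e ∈ P₁, w = fun p => ((∏ i, p i ^ e i : Fˣ) : F)}) =
        Submodule.span F {w : (Fin m → Fˣ) → F |
            ∃ e ∈ P₂, w = fun p => ((∏ i, p i ^ e i : Fˣ) : F)} := by
  have hgen (P : Finset (Fin m → ℤ)) :
      {w : (Fin m → Fˣ) → F | ∃ e ∈ P, w = fun p => ((∏ i, p i ^ e i : Fˣ) : F)} =
        monomialEval '' P := by
    ext w
    simp only [Set.mem_image, Finset.mem_coe, eq_comm]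
    rfl
  let U := M.nonsingInvUnit (Int.isUnit_iff.mpr hM)
  refine ⟨Matrix.torusPerm U, torusMonomial lam, ?_⟩
  rw [hgen, hgen, ← hT, Finset.coe_image]
  exact map_span_monomialEval U lam P₁

/-- Lattice equivalent polytopes give monomially equivalent toric codes: if
`T(x) = Mx + λ` with `M ∈ GL(m, ℤ)` maps the lattice points `P₁` onto `P₂`, then there
are a permutation `σ` of `(F_q^*)^m` and scalars `c_p ∈ F_q^*` such that
`w ↦ (p ↦ c_p · w (σ p))` maps the toric code of `P₁` onto that of `P₂`. -/
theorem lattice_equiv_gives_monomially_equivalent_codes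
    {F : Type*} [Field F] [Fintype F] (q m : ℕ) (hq : Fintype.card F = q)
    (P₁ P₂ : Finset (Fin m → ℤ))
    (hP₁ : ∀ e ∈ P₁, ∀ i, 0 ≤ e i ∧ e i ≤ (q : ℤ) - 2)
    (hP₂ : ∀ e ∈ P₂, ∀ i, 0 ≤ e i ∧ e i ≤ (q : ℤ) - 2)
    (M : Matrix (Fin m) (Fin m) ℤ) (hM : M.det = 1 ∨ M.det = -1) (lam : Fin m → ℤ)
    (hT : P₁.image (fun e => M.mulVec e + lam) = P₂) :
    ∃ (σ : Equiv.Perm (Fin m → Fˣ)) (c : (Fin m → Fˣ) → Fˣ),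
      Submodule.map (monomialMap c σ)
          (Submodule.span F {w : (Fin m → Fˣ) → F |
            ∃ e ∈ P₁, w = fun p => ((∏ i, p i ^ e i : Fˣ) : F)}) =
        Submodule.span F {w : (Fin m → Fˣ) → F |
            ∃ e ∈ P₂, w = fun p => ((∏ i, p i ^ e i : Fˣ) : F)} :=
  lattice_equiv_gives_monomially_equivalent_codes_general m P₁ P₂ M hM lam hT
end

section
/- Let F_q be a finite field with q > 2 and let C ⊆ F_q^{(q−1)²} be the toric code spanned by the evaluations of {1, x, y, xy} at all points of (F_q^*)². Then for any a ∈ F_q^* and b ∈ F_q^*, the polynomial (x − a)(y − b) evaluates to a codeword of weight exactly (q−1)² − (2(q−1) − 1) = (q−1)² − 2q + 3, and this is the minimum distance of C; i.e., d(C) = ((q−1) − 1)² = (q−2)². -/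
/-- For the toric code of the unit square (span of `1, x, y, xy` evaluated on `(F_q^*)²`):
each polynomial `(x - a)(y - b)` with `a, b ∈ F_q^*` evaluates to a codeword of weight
exactly `(q-1)² - (2(q-1) - 1) = (q-2)²`, and this is the minimum distance of the code. -/
theorem unit_square_toric_code_min_dist {F : Type*} [Field F] [Fintype F]
    (q : ℕ) (hq : Fintype.card F = q) (h2 : 2 < q)
    (C : Set ((Fˣ × Fˣ) → F))
    (hC : C = {w | ∃ c : Fin 2 × Fin 2 → F,
      w = fun p => ∑ e : Fin 2 × Fin 2,
        c e * (p.1 : F) ^ (e.1 : ℕ) * (p.2 : F) ^ (e.2 : ℕ)}) :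
    (q - 1) ^ 2 - (2 * q - 3) = (q - 2) ^ 2 ∧
    (∀ a b : Fˣ,
      (fun p : Fˣ × Fˣ => ((p.1 : F) - (a : F)) * ((p.2 : F) - (b : F))) ∈ C ∧
      {p : Fˣ × Fˣ | ((p.1 : F) - (a : F)) * ((p.2 : F) - (b : F)) ≠ 0}.ncard
        = (q - 1) ^ 2 - (2 * q - 3)) ∧
    (∀ w ∈ C, w ≠ 0 → (q - 2) ^ 2 ≤ {p | w p ≠ 0}.ncard) := by
  classical
  have hq1 : Fintype.card Fˣ = q - 1 := by rw [Fintype.card_units, hq]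
  have key : (q - 1) ^ 2 - (2 * q - 3) = (q - 2) ^ 2 := by
    obtain ⟨k, rfl⟩ : ∃ k, q = k + 3 := ⟨q - 3, by omega⟩
    have e1 : k + 3 - 1 = k + 2 := by omega
    have e2 : k + 3 - 2 = k + 1 := by omega
    have e3 : 2 * (k + 3) - 3 = 2 * k + 3 := by omega
    rw [e1, e2, e3, Nat.sub_eq_iff_eq_add (by nlinarith)]
    ring
  refine ⟨key, fun a b => ⟨?_, ?_⟩, ?_⟩
  · rw [hC]
    refine ⟨fun e => ![![(a : F) * b, -(a : F)], ![-(b : F), 1]] e.1 e.2, ?_⟩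
    funext p
    simp only [Fintype.sum_prod_type, Fin.sum_univ_two]
    simp [Matrix.cons_val_zero, Matrix.cons_val_one]
    ring
  · have hset : {p : Fˣ × Fˣ | ((p.1 : F) - (a : F)) * ((p.2 : F) - (b : F)) ≠ 0}
        = ↑((Finset.univ.erase a) ×ˢ (Finset.univ.erase b)) := by
      ext p
      simp [mul_ne_zero_iff, sub_ne_zero, Units.ext_iff]
    rw [hset, Set.ncard_coe_finset, Finset.card_product]
    simp only [Finset.card_erase_of_mem (Finset.mem_univ _), Finset.card_univ, hq1]
    rw [key]
    have h' : q - 1 - 1 = q - 2 := by omega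
    rw [h', pow_two]
  · intro w hw hw0
    rw [hC] at hw
    obtain ⟨c, rfl⟩ := hw
    set A : Fˣ → F := fun y => c (0, 0) + c (0, 1) * y with hA
    set B : Fˣ → F := fun y => c (1, 0) + c (1, 1) * y with hB
    have hwval : ∀ p : Fˣ × Fˣ,
        (∑ e : Fin 2 × Fin 2, c e * (p.1 : F) ^ (e.1 : ℕ) * (p.2 : F) ^ (e.2 : ℕ))
          = A p.2 + (p.1 : F) * B p.2 := by
      intro p
      simp only [Fintype.sum_prod_type, Fin.sum_univ_two, hA, hB]
      simp
      ring
    set Z : Finset (Fˣ × Fˣ) :=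
      Finset.univ.filter (fun p : Fˣ × Fˣ => A p.2 + (p.1 : F) * B p.2 = 0) with hZ
    set S : Finset Fˣ := Finset.univ.filter (fun y => A y = 0 ∧ B y = 0) with hS
    -- S has at most one element
    have hScard : S.card ≤ 1 := by
      by_contra h
      push_neg at h
      obtain ⟨y1, hy1, y2, hy2, hne⟩ := Finset.one_lt_card.mp h
      rw [hS, Finset.mem_filter] at hy1 hy2
      have hy12 : (y1 : F) - y2 ≠ 0 := sub_ne_zero.mpr (fun h => hne (Units.ext h))
      have hc01 : c (0, 1) = 0 := by
        have : c (0, 1) * ((y1 : F) - y2) = 0 := by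
          have := hy1.2.1; have := hy2.2.1
          simp only [hA] at *
          linear_combination hy1.2.1 - hy2.2.1
        exact (mul_eq_zero.mp this).resolve_right hy12
      have hc00 : c (0, 0) = 0 := by
        have := hy1.2.1; simp only [hA, hc01, zero_mul, add_zero] at this; exact this
      have hc11 : c (1, 1) = 0 := by
        have h' : c (1, 1) * ((y1 : F) - y2) = 0 := by
          linear_combination hy1.2.2 - hy2.2.2
        exact (mul_eq_zero.mp h').resolve_right hy12
      have hc10 : c (1, 0) = 0 := by
        have := hy1.2.2; simp only [hB, hc11, zero_mul, add_zero] at this; exact this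
      exact hw0 (funext fun p => by
        have h' := hwval p
        simp only [hA, hB, hc00, hc01, hc10, hc11, zero_mul, mul_zero,
          add_zero, zero_add] at h'
        simpa using h')
    -- fiberwise count
    have hZcard : Z.card = ∑ y : Fˣ, (Z.filter (fun p => p.2 = y)).card :=
      Finset.card_eq_sum_card_fiberwise (fun p _ => Finset.mem_univ p.2)
    have hfiber_le : ∀ y : Fˣ, (Z.filter (fun p => p.2 = y)).card ≤ q - 1 := by
      intro y
      calc (Z.filter (fun p => p.2 = y)).card
          ≤ (Finset.univ : Finset Fˣ).card := by
            apply Finset.card_le_card_of_injOn Prod.fst (fun p _ => Finset.mem_univ _)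
            intro p1 h1 p2 h2 hfst
            rw [Finset.mem_coe, Finset.mem_filter] at h1 h2
            exact Prod.ext hfst (h1.2.trans h2.2.symm)
        _ = q - 1 := by rw [Finset.card_univ, hq1]
    have hfiber_one : ∀ y : Fˣ, y ∉ S → (Z.filter (fun p => p.2 = y)).card ≤ 1 := by
      intro y hy
      rw [hS, Finset.mem_filter] at hy
      push_neg at hy
      have hy' := hy (Finset.mem_univ y)
      apply Finset.card_le_one.mpr
      intro p1 h1 p2 h2
      rw [Finset.mem_filter, hZ, Finset.mem_filter] at h1 h2
      obtain ⟨⟨-, he1⟩, hy1⟩ := h1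
      obtain ⟨⟨-, he2⟩, hy2⟩ := h2
      rw [hy1] at he1
      rw [hy2] at he2
      by_cases hBy : B y = 0
      · exfalso
        rw [hBy, mul_zero, add_zero] at he1
        exact hy' he1 hBy
      · have hx : (p1.1 : F) = p2.1 := by
          have h' : (p1.1 : F) * B y = (p2.1 : F) * B y := by
            linear_combination he1 - he2
          exact mul_right_cancel₀ hBy h'
        exact Prod.ext (Units.ext hx) (hy1.trans hy2.symm)
    have hZle : Z.card ≤ 2 * q - 3 := by
      rw [hZcard, ← Finset.sum_filter_add_sum_filter_not Finset.univ (fun y => y ∈ S)]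
      have h1 : ∑ y ∈ Finset.univ.filter (fun y => y ∈ S),
          (Z.filter (fun p => p.2 = y)).card ≤ S.card * (q - 1) := by
        rw [Finset.filter_mem_eq_inter, Finset.univ_inter]
        have := Finset.sum_le_card_nsmul S _ (q - 1) (fun y _ => hfiber_le y)
        simpa [smul_eq_mul] using this
      have h2 : ∑ y ∈ Finset.univ.filter (fun y => y ∉ S),
          (Z.filter (fun p => p.2 = y)).card
          ≤ (Finset.univ.filter (fun y => y ∉ S)).card * 1 := by
        have := Finset.sum_le_card_nsmul (Finset.univ.filter (fun y => y ∉ S)) _ 1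
          (fun y hy => hfiber_one y (Finset.mem_filter.mp hy).2)
        simpa [smul_eq_mul] using this
      have hsplit : S.card + (Finset.univ.filter (fun y => y ∉ S)).card = q - 1 := by
        have h' := Finset.card_filter_add_card_filter_not
          (s := (Finset.univ : Finset Fˣ)) (p := fun y => y ∈ S)
        rwa [Finset.filter_mem_eq_inter, Finset.univ_inter, Finset.card_univ, hq1] at h'
      rcases (by omega : S.card = 0 ∨ S.card = 1) with h | h <;>
        rw [h] at hsplit h1 <;> omega
    -- conclude
    have hcompl : {p : Fˣ × Fˣ |
        (∑ e : Fin 2 × Fin 2, c e * (p.1 : F) ^ (e.1 : ℕ) * (p.2 : F) ^ (e.2 : ℕ)) ≠ 0}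
        = ↑(Finset.univ.filter (fun p : Fˣ × Fˣ => ¬ (A p.2 + (p.1 : F) * B p.2 = 0))) := by
      ext p
      simp [hwval p]
    rw [hcompl, Set.ncard_coe_finset]
    have hsum := Finset.card_filter_add_card_filter_not
      (s := Finset.univ) (p := fun p : Fˣ × Fˣ => A p.2 + (p.1 : F) * B p.2 = 0)
    rw [Finset.card_univ] at hsum
    have hcards : Fintype.card (Fˣ × Fˣ) = (q - 1) ^ 2 := by
      rw [Fintype.card_prod, hq1, pow_two]
    rw [hcards] at hsum
    have hZ' : (Finset.univ.filter (fun p : Fˣ × Fˣ =>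
        A p.2 + (p.1 : F) * B p.2 = 0)).card = Z.card := rfl
    omega
end

section
/- Let F_q be a finite field with q > 2 and let C be the toric code of length (q−1)² spanned by the evaluations of {1, x, y} at all points of (F_q^*)² (the code of the standard triangle P_1(2)). Then the minimum distance of C is (q−1)² − (q−1), and every vector obtained by evaluating x − a or y − a for a ∈ F_q^* achieves this weight. -/
open Set

lemma TTC.card_units {F : Type*} [Field F] [Fintype F] {q : ℕ}
    (hq : Fintype.card F = q) : Nat.card Fˣ = q - 1 := by
  classical
  rw [Nat.card_eq_fintype_card, Fintype.card_units, hq]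

lemma TTC.card_prod {F : Type*} [Field F] [Fintype F] {q : ℕ}
    (hq : Fintype.card F = q) : Nat.card (Fˣ × Fˣ) = (q - 1) ^ 2 := by
  rw [Nat.card_prod, TTC.card_units hq, sq]

lemma TTC.ncard_compl {α : Type*} [Finite α] (s : Set α) :
    sᶜ.ncard = Nat.card α - s.ncard := by
  rw [Set.compl_eq_univ_diff, Set.ncard_diff (Set.subset_univ s), Set.ncard_univ]

lemma TTC.zset_le {F : Type*} [Field F] [Fintype F] (c₀ c₁ c₂ : F)
    (h : ¬(c₀ = 0 ∧ c₁ = 0 ∧ c₂ = 0)) :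
    {p : Fˣ × Fˣ | c₀ + c₁ * (p.1 : F) + c₂ * (p.2 : F) = 0}.ncard ≤ Nat.card Fˣ := by
  rw [← Set.ncard_univ Fˣ]
  by_cases h2 : c₂ = 0
  · by_cases h1 : c₁ = 0
    · have h0 : c₀ ≠ 0 := fun hc => h ⟨hc, h1, h2⟩
      have he : {p : Fˣ × Fˣ | c₀ + c₁ * (p.1 : F) + c₂ * (p.2 : F) = 0} = ∅ := by
        ext p; simp [h1, h2, h0]
      rw [he]; simp
    · apply Set.ncard_le_ncard_of_injOn (fun p => p.2)
      · intro p _; trivial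
      · intro p hp r hr hpr
        have hpr' : p.2 = r.2 := hpr
        have hp' : c₀ + c₁ * (p.1 : F) = 0 := by simpa [h2] using hp
        have hr' : c₀ + c₁ * (r.1 : F) = 0 := by simpa [h2] using hr
        have hx : (p.1 : F) = (r.1 : F) := by
          have h' : c₁ * (p.1 : F) = c₁ * (r.1 : F) := by linear_combination hp' - hr'
          exact mul_left_cancel₀ h1 h'
        exact Prod.ext (Units.ext hx) hpr'
  · apply Set.ncard_le_ncard_of_injOn (fun p => p.1)
    · intro p _; trivial
    · intro p hp r hr hpr
      have hpr' : p.1 = r.1 := hpr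
      have hp' : c₀ + c₁ * (p.1 : F) + c₂ * (p.2 : F) = 0 := hp
      have hr' : c₀ + c₁ * (r.1 : F) + c₂ * (r.2 : F) = 0 := hr
      rw [hpr'] at hp'
      have hy : (p.2 : F) = (r.2 : F) := by
        have h' : c₂ * (p.2 : F) = c₂ * (r.2 : F) := by linear_combination hp' - hr'
        exact mul_left_cancel₀ h2 h'
      exact Prod.ext hpr' (Units.ext hy)

lemma TTC.line_ncard {F : Type*} [Field F] [Fintype F] (a : Fˣ) :
    {p : Fˣ × Fˣ | p.1 = a}.ncard = Nat.card Fˣ := by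
  have he : {p : Fˣ × Fˣ | p.1 = a} = (fun y : Fˣ => (a, y)) '' Set.univ := by
    ext ⟨x, y⟩
    simp [eq_comm, Prod.ext_iff]
  rw [he, Set.ncard_image_of_injective _ (fun y z hyz => (Prod.ext_iff.1 hyz).2),
    Set.ncard_univ]

lemma TTC.line_ncard' {F : Type*} [Field F] [Fintype F] (a : Fˣ) :
    {p : Fˣ × Fˣ | p.2 = a}.ncard = Nat.card Fˣ := by
  have he : {p : Fˣ × Fˣ | p.2 = a} = (fun x : Fˣ => (x, a)) '' Set.univ := by
    ext ⟨x, y⟩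
    simp [eq_comm, Prod.ext_iff]
  rw [he, Set.ncard_image_of_injective _ (fun y z hyz => (Prod.ext_iff.1 hyz).1),
    Set.ncard_univ]

/-- For the toric code of the standard triangle `P₁(2)` (span of `1, x, y` evaluated on
`(F_q^*)²`): the minimum distance is `(q-1)² - (q-1)`, and every evaluation of `x - a` or
`y - a` with `a ∈ F_q^*` is a codeword achieving this weight. -/
theorem triangle_toric_code_min_dist {F : Type*} [Field F] [Fintype F]
    (q : ℕ) (hq : Fintype.card F = q) (h2 : 2 < q)
    (C : Set ((Fˣ × Fˣ) → F))
    (hC : C = {w | ∃ c₀ c₁ c₂ : F,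
      w = fun p => c₀ + c₁ * (p.1 : F) + c₂ * (p.2 : F)}) :
    (∀ w ∈ C, w ≠ 0 → (q - 1) ^ 2 - (q - 1) ≤ {p | w p ≠ 0}.ncard) ∧
    (∃ w ∈ C, w ≠ 0 ∧ {p | w p ≠ 0}.ncard = (q - 1) ^ 2 - (q - 1)) ∧
    (∀ a : Fˣ,
      ((fun p : Fˣ × Fˣ => (p.1 : F) - (a : F)) ∈ C ∧
        {p : Fˣ × Fˣ | (p.1 : F) - (a : F) ≠ 0}.ncard = (q - 1) ^ 2 - (q - 1)) ∧
      ((fun p : Fˣ × Fˣ => (p.2 : F) - (a : F)) ∈ C ∧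
        {p : Fˣ × Fˣ | (p.2 : F) - (a : F) ≠ 0}.ncard = (q - 1) ^ 2 - (q - 1))) := by
  classical
  have hcu := TTC.card_units hq
  have hcp := TTC.card_prod (F := F) hq
  have third : ∀ a : Fˣ,
      ((fun p : Fˣ × Fˣ => (p.1 : F) - (a : F)) ∈ C ∧
        {p : Fˣ × Fˣ | (p.1 : F) - (a : F) ≠ 0}.ncard = (q - 1) ^ 2 - (q - 1)) ∧
      ((fun p : Fˣ × Fˣ => (p.2 : F) - (a : F)) ∈ C ∧
        {p : Fˣ × Fˣ | (p.2 : F) - (a : F) ≠ 0}.ncard = (q - 1) ^ 2 - (q - 1)) := by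
    intro a
    constructor
    · constructor
      · rw [hC]
        exact ⟨-(a : F), 1, 0, by funext p; ring⟩
      · have hset : {p : Fˣ × Fˣ | (p.1 : F) - (a : F) ≠ 0}
            = {p : Fˣ × Fˣ | p.1 = a}ᶜ := by
          ext p
          simp [sub_eq_zero, Units.ext_iff]
        rw [hset, TTC.ncard_compl, TTC.line_ncard, hcu, hcp]
    · constructor
      · rw [hC]
        exact ⟨-(a : F), 0, 1, by funext p; ring⟩
      · have hset : {p : Fˣ × Fˣ | (p.2 : F) - (a : F) ≠ 0}
            = {p : Fˣ × Fˣ | p.2 = a}ᶜ := by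
          ext p
          simp [sub_eq_zero, Units.ext_iff]
        rw [hset, TTC.ncard_compl, TTC.line_ncard', hcu, hcp]
  refine ⟨?_, ?_, third⟩
  · intro w hw hw0
    rw [hC] at hw
    obtain ⟨c₀, c₁, c₂, rfl⟩ := hw
    have hne : ¬(c₀ = 0 ∧ c₁ = 0 ∧ c₂ = 0) := by
      rintro ⟨h0, h1, h2'⟩
      apply hw0
      funext p
      simp [h0, h1, h2']
    have hset : {p : Fˣ × Fˣ | c₀ + c₁ * (p.1 : F) + c₂ * (p.2 : F) ≠ 0}
        = {p : Fˣ × Fˣ | c₀ + c₁ * (p.1 : F) + c₂ * (p.2 : F) = 0}ᶜ := by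
      ext p; simp
    show (q - 1) ^ 2 - (q - 1) ≤ {p : Fˣ × Fˣ | c₀ + c₁ * (p.1 : F) + c₂ * (p.2 : F) ≠ 0}.ncard
    rw [hset, TTC.ncard_compl, hcp]
    have hz := TTC.zset_le c₀ c₁ c₂ hne
    rw [hcu] at hz
    omega
  · refine ⟨fun p => (p.1 : F) - (1 : Fˣ), ((third 1).1).1, ?_, ((third 1).1).2⟩
    intro h
    have hcard : 1 < Fintype.card Fˣ := by
      have : Nat.card Fˣ = Fintype.card Fˣ := Nat.card_eq_fintype_card
      omega
    obtain ⟨u, hu⟩ := Fintype.exists_ne_of_one_lt_card hcard 1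
    have := congrFun h (u, 1)
    simp only [Pi.zero_apply, sub_eq_zero] at this
    exact hu (Units.ext this)
end
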